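/- arXiv:1006.1381 — 7 statements merged into one kernel-verified Lean document; each statement's English description precedes it below -/
import Mathlib

section
/- Let U and V be finite sets and let n ∈ ℕ with I = Fin n. Choose a set R of representatives of the equivalence classes of recollements of the pair (U, V); for a recollement (C, u : U → C, v : V → C) in R, the symmetric group S_n of Fin n acts on Inj(C, Fin n) by postcomposition, and S_n acts diagonally on Inj(U, Fin n) × Inj(V, Fin n) by postcomposition in each factor. Then the map from the disjoint union over (C, u, v) ∈ R of Inj(C, Fin n) to Inj(U, Fin n) × Inj(V, Fin n), sending h ∈ Inj(C, Fin n) to the pair (h ∘ u, h ∘ v), is an S_n-equivariant bijection. -/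
/-- A recollement of a pair of finite sets `U, V`: a finite set `C` together with
injections `u : U ↪ C`, `v : V ↪ C` whose images cover `C`. -/
structure Recollement (U V : Type) : Type 1 where
  C : Type
  [fintypeC : Fintype C]
  u : U ↪ C
  v : V ↪ C
  covers : ∀ c : C, (∃ x, u x = c) ∨ (∃ y, v y = c)

attribute [instance] Recollement.fintypeC

/-- Two recollements are equivalent if there is a bijection of the underlying sets
commuting with the injections from `U` and from `V`. -/
def Recollement.Equivalent {U V : Type} (r₁ r₂ : Recollement U V) : Prop :=
  ∃ e : r₁.C ≃ r₂.C, (∀ x, e (r₁.u x) = r₂.u x) ∧ (∀ y, e (r₁.v y) = r₂.v y)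

/-!
A pair of injections `f : U ↪ X`, `g : V ↪ X` comes from exactly one recollement, up to
equivalence: the union of the images `f U ∪ g V`, with `f` and `g` as its injections. Conversely,
an injection `h : C ↪ X` of a recollement is determined by `h ∘ u` and `h ∘ v` because `u` and
`v` cover `C`, and two such `h` with the same restrictions identify their sources through their
common image `h C = h (u U) ∪ h (v V)`. Equivariance holds by associativity of composition.
-/

namespace Recollement

variable {U V X : Type}

protected theorem Equivalent.refl (r : Recollement U V) : r.Equivalent r :=
  ⟨Equiv.refl _, fun _ => rfl, fun _ => rfl⟩

theorem embedding_ext {r : Recollement U V} {h h' : r.C ↪ X}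
    (hu : r.u.trans h = r.u.trans h') (hv : r.v.trans h = r.v.trans h') : h = h' := by
  ext c
  rcases r.covers c with ⟨x, rfl⟩ | ⟨y, rfl⟩
  · exact DFunLike.congr_fun hu x
  · exact DFunLike.congr_fun hv y

theorem range_eq_range_u_trans_union (r : Recollement U V) (h : r.C ↪ X) :
    Set.range h = Set.range (r.u.trans h) ∪ Set.range (r.v.trans h) := by
  ext z
  constructor
  · rintro ⟨c, rfl⟩
    rcases r.covers c with ⟨x, rfl⟩ | ⟨y, rfl⟩
    · exact Or.inl ⟨x, rfl⟩
    · exact Or.inr ⟨y, rfl⟩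
  · rintro (⟨x, rfl⟩ | ⟨y, rfl⟩)
    · exact ⟨r.u x, rfl⟩
    · exact ⟨r.v y, rfl⟩

theorem equivalent_of_trans_eq {r r' : Recollement U V} (h : r.C ↪ X) (h' : r'.C ↪ X)
    (hu : r.u.trans h = r'.u.trans h') (hv : r.v.trans h = r'.v.trans h') :
    r.Equivalent r' := by
  have hrange : Set.range h = Set.range h' := by
    rw [range_eq_range_u_trans_union, range_eq_range_u_trans_union, hu, hv]
  let e : r.C ≃ r'.C := (Equiv.ofInjective h h.injective).trans
    ((Equiv.setCongr hrange).trans (Equiv.ofInjective h' h'.injective).symm)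
  have he : ∀ c, h' (e c) = h c := fun c => Equiv.apply_ofInjective_symm h'.injective _
  refine ⟨e, fun x => h'.injective ?_, fun y => h'.injective ?_⟩
  · rw [he]; exact DFunLike.congr_fun hu x
  · rw [he]; exact DFunLike.congr_fun hv y

theorem Equivalent.exists_trans_eq {r r' : Recollement U V} (hr : r.Equivalent r')
    (h : r.C ↪ X) : ∃ h' : r'.C ↪ X, r'.u.trans h' = r.u.trans h ∧ r'.v.trans h' = r.v.trans h := by
  obtain ⟨e, heu, hev⟩ := hr
  refine ⟨e.symm.toEmbedding.trans h, ?_, ?_⟩ <;> ext z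
  · simp [← heu]
  · simp [← hev]

noncomputable def ofEmbeddings [Finite U] [Finite V] (f : U ↪ X) (g : V ↪ X) :
    Recollement U V where
  C := ↥(Set.range f ∪ Set.range g)
  fintypeC := Fintype.ofFinite _
  u := f.codRestrict _ fun x => Or.inl ⟨x, rfl⟩
  v := g.codRestrict _ fun y => Or.inr ⟨y, rfl⟩
  covers := by
    rintro ⟨_, ⟨x, rfl⟩ | ⟨y, rfl⟩⟩
    · exact Or.inl ⟨x, rfl⟩
    · exact Or.inr ⟨y, rfl⟩

section ofEmbeddings

variable [Finite U] [Finite V] (f : U ↪ X) (g : V ↪ X)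

theorem ofEmbeddings_u_trans_subtype :
    (ofEmbeddings f g).u.trans (Function.Embedding.subtype _) = f := rfl

theorem ofEmbeddings_v_trans_subtype :
    (ofEmbeddings f g).v.trans (Function.Embedding.subtype _) = g := rfl

end ofEmbeddings

end Recollement

/-- Let `U, V` be finite sets, `n ∈ ℕ` and `R` a set of representatives
of the equivalence classes of recollements of `(U, V)`.  Then the map
`⨿_{(C,u,v) ∈ R} Inj(C, Fin n) → Inj(U, Fin n) × Inj(V, Fin n)`, `h ↦ (h ∘ u, h ∘ v)`,
is an `S_n`-equivariant bijection, where `S_n` acts everywhere by postcomposition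
(diagonally on the product). -/
theorem stmt3 (U V : Type) [Fintype U] [Fintype V] (n : ℕ)
    (R : Set (Recollement U V))
    (hR : ∀ P : Recollement U V, ∃! r : R, P.Equivalent r.1) :
    Function.Bijective
        (fun p : Σ r : R, (r.1.C ↪ Fin n) =>
          ((p.1.1.u.trans p.2, p.1.1.v.trans p.2) : (U ↪ Fin n) × (V ↪ Fin n))) ∧
      ∀ (σ : Equiv.Perm (Fin n)) (p : Σ r : R, (r.1.C ↪ Fin n)),
        (fun p : Σ r : R, (r.1.C ↪ Fin n) =>
            ((p.1.1.u.trans p.2, p.1.1.v.trans p.2) : (U ↪ Fin n) × (V ↪ Fin n)))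
          ⟨p.1, p.2.trans σ.toEmbedding⟩ =
        ((p.1.1.u.trans p.2).trans σ.toEmbedding,
          (p.1.1.v.trans p.2).trans σ.toEmbedding) := by
  refine ⟨⟨?injective, ?surjective⟩, fun _ _ => rfl⟩
  case injective =>
    rintro ⟨r, h⟩ ⟨r', h'⟩ heq
    obtain ⟨hu, hv⟩ := Prod.mk.inj heq
    obtain rfl : r = r' := (hR r.1).unique (Recollement.Equivalent.refl r.1)
      (Recollement.equivalent_of_trans_eq h h' hu hv)
    exact congrArg (Sigma.mk r) (Recollement.embedding_ext (h := h) (h' := h') hu hv)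
  case surjective =>
    rintro ⟨f, g⟩
    obtain ⟨r, hr, -⟩ := hR (Recollement.ofEmbeddings f g)
    obtain ⟨h, hu, hv⟩ := hr.exists_trans_eq (Function.Embedding.subtype _)
    exact ⟨⟨r, h⟩, Prod.ext (hu.trans (Recollement.ofEmbeddings_u_trans_subtype f g))
      (hv.trans (Recollement.ofEmbeddings_v_trans_subtype f g))⟩
end

section
/- Let U_1, …, U_m be finite sets and n ∈ ℕ. Let (f_1, …, f_m) and (g_1, …, g_m) be two m-tuples with f_i, g_i ∈ Inj(U_i, Fin n) for each i. Then there exists a permutation σ ∈ S_n with σ ∘ f_i = g_i for all i if and only if for all indices i, j and all elements u ∈ U_i and v ∈ U_j, one has f_i(u) = f_j(v) exactly when g_i(u) = g_j(v). -/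
/-!
Both tuples are single maps on the disjoint union `Σ i, U i`, and the condition says that these
two maps have the same kernel. Maps with equal kernels factor injectively through the same
quotient, and any two injections of a finite set into `Fin n` differ by a permutation.
-/

namespace Equiv.Perm

variable {α β : Type*}

theorem exists_apply_eq_of_forall_eq_iff_eq [Finite β] {F G : α → β}
    (h : ∀ x y, F x = F y ↔ G x = G y) : ∃ σ : Perm β, ∀ a, σ (F a) = G a := by
  let G' : Quotient (Setoid.ker F) → β := Quotient.lift G fun x y hxy => (h x y).1 hxy
  have hG' : Function.Injective G' := by
    rintro ⟨x⟩ ⟨y⟩ hxy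
    exact Quotient.sound ((h x y).2 hxy)
  have : Finite (Quotient (Setoid.ker F)) := .of_injective _ (Setoid.kerLift_injective F)
  obtain ⟨σ, hσ⟩ := exists_extending_pair _ G' (Setoid.kerLift_injective F) hG'
  exact ⟨σ, fun a => hσ ⟦a⟧⟩

theorem exists_apply_eq_iff_forall_eq_iff_eq [Finite β] {F G : α → β} :
    (∃ σ : Perm β, ∀ a, σ (F a) = G a) ↔ ∀ x y, F x = F y ↔ G x = G y := by
  refine ⟨?_, exists_apply_eq_of_forall_eq_iff_eq⟩
  rintro ⟨σ, hσ⟩ x y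
  rw [← hσ x, ← hσ y, σ.injective.eq_iff]

end Equiv.Perm

theorem stmt4_general (m : ℕ) (U : Fin m → Type) (n : ℕ)
    (f g : ∀ i, U i ↪ Fin n) :
    (∃ σ : Equiv.Perm (Fin n), ∀ (i : Fin m) (u : U i), σ (f i u) = g i u) ↔
      ∀ (i j : Fin m) (u : U i) (v : U j), f i u = f j v ↔ g i u = g j v := by
  have := Equiv.Perm.exists_apply_eq_iff_forall_eq_iff_eq (α := Σ i, U i)
    (F := fun x => f x.1 x.2) (G := fun x => g x.1 x.2)
  simp only [Sigma.forall] at this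
  rw [this]
  exact ⟨fun h i j u v => h i u j v, fun h i u j v => h i j u v⟩

/-- Let `U₁, …, U_m` be finite sets and `n ∈ ℕ`.  Two `m`-tuples
`(f_i)` and `(g_i)` of injections `U_i ↪ Fin n` lie in the same orbit of the diagonal
postcomposition action of `S_n` iff for all `i, j` and all `u ∈ U_i`, `v ∈ U_j` we have
`f_i u = f_j v ↔ g_i u = g_j v`. -/
theorem stmt4 (m : ℕ) (U : Fin m → Type) [∀ i, Fintype (U i)] (n : ℕ)
    (f g : ∀ i, U i ↪ Fin n) :
    (∃ σ : Equiv.Perm (Fin n), ∀ (i : Fin m) (u : U i), σ (f i u) = g i u) ↔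
      ∀ (i j : Fin m) (u : U i) (v : U j), f i u = f j v ↔ g i u = g j v :=
  stmt4_general m U n f g
end

section
/- Let I, J, V be finite sets. Let Sym(I), Sym(J), Sym(I ⊔ J) denote the symmetric groups on I, J, and the disjoint union I ⊔ J, with Sym(I) × Sym(J) regarded as a subgroup of Sym(I ⊔ J) in the natural way. Consider ℂ[Inj(V, I)] as a representation of Sym(I) (by postcomposition), ℂ[Inj(J, J)] as a representation of Sym(J) (by postcomposition), and their outer tensor product ℂ[Inj(V, I)] ⊗_ℂ ℂ[Inj(J, J)] as a representation of Sym(I) × Sym(J). Then the induced representation ℂ[Sym(I ⊔ J)] ⊗_{ℂ[Sym(I) × Sym(J)]} ( ℂ[Inj(V, I)] ⊗_ℂ ℂ[Inj(J, J)] ) is isomorphic, as a representation of Sym(I ⊔ J), to the permutation representation ℂ[Inj(V ⊔ J, I ⊔ J)]. -/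
/-!
Inducing a permutation module `ℂ[X]` from `H` to `G` gives the permutation module on
`G ×_H X`. Here `X = Inj(V, I) × Inj(J, J)`, and `(g, f, h) ↦ g ∘ (f ⊔ h)` identifies
`G ×_H X` with `Inj(V ⊔ J, I ⊔ J)`: every injection arises this way because `Sym(I ⊔ J)`
acts transitively on injections out of a fixed finite type, and a permutation carrying
`f ⊔ h` to `f' ⊔ h'` maps `J` onto `J` (as `h'` is onto), so it lies in `Sym(I) × Sym(J)`.
-/

open scoped TensorProduct

/-- The symmetric group of `β` acts on embeddings `α ↪ β` by postcomposition. -/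
instance permEmbeddingMulAction (α β : Type*) :
    MulAction (Equiv.Perm β) (α ↪ β) where
  smul σ f := f.trans σ.toEmbedding
  one_smul f := by ext x; rfl
  mul_smul σ τ f := by ext x; rfl

/-- The permutation representation on `H →₀ k` induced by an action of `G` on `H`
(the meaning of `Representation.ofMulAction` in the older Mathlib). -/
noncomputable def ofMulActionFinsupp (k : Type*) [Semiring k] (G : Type*) [Monoid G]
    (H : Type*) [MulAction G H] : Representation k G (H →₀ k) where
  toFun g := Finsupp.lmapDomain k k (g • ·)
  map_one' := by ext; simp
  map_mul' x y := by ext; simp [mul_smul]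

section Induction

variable {k : Type*} [CommRing k] {H G : Type*} [Group H] [Group G]
  {M : Type*} [AddCommGroup M] [Module k M]

/-- The submodule of relations in `k[G] ⊗ M = (G →₀ M)` defining the induced module
`k[G] ⊗_{k[H]} M` along a group homomorphism `ι : H →* G`, for a representation `τ` of
`H` on `M`:  it is spanned by the elements `e_{g ι(h)} ⊗ m − e_g ⊗ τ(h)m`. -/
noncomputable def indRel (ι : H →* G) (τ : Representation k H M) :
    Submodule k (G →₀ M) :=
  Submodule.span k
    {x | ∃ (g : G) (h : H) (m : M),
      x = Finsupp.single (g * ι h) m - Finsupp.single g (τ h m)}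

/-- The underlying module of the induced representation `k[G] ⊗_{k[H]} M`, realized as
the quotient of `k[G] ⊗_k M = (G →₀ M)` by the relations `g ι(h) ⊗ m = g ⊗ τ(h)m`. -/
noncomputable abbrev IndModule (ι : H →* G) (τ : Representation k H M) : Type _ :=
  (G →₀ M) ⧸ indRel ι τ

/-- The induced representation `k[G] ⊗_{k[H]} M` of `G`, with `G` acting by left
translation on the first factor. -/
noncomputable def indRep (ι : H →* G) (τ : Representation k H M) :
    Representation k G (IndModule ι τ) where
  toFun s :=
    Submodule.mapQ (indRel ι τ) (indRel ι τ)
      (Finsupp.lmapDomain M k (fun g : G => s * g))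
      (by
        rw [indRel, Submodule.span_le]
        rintro x ⟨g, h, m, rfl⟩
        simp only [SetLike.mem_coe, Submodule.mem_comap, map_sub,
          Finsupp.lmapDomain_apply, Finsupp.mapDomain_single]
        rw [← mul_assoc]
        exact Submodule.subset_span ⟨s * g, h, m, rfl⟩)
  map_one' := by
    refine Submodule.linearMap_qext _ (Finsupp.lhom_ext fun g m => ?_)
    simp [Submodule.mapQ_apply, Finsupp.lmapDomain_apply, Finsupp.mapDomain_single]
  map_mul' s t := by
    refine Submodule.linearMap_qext _ (Finsupp.lhom_ext fun g m => ?_)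
    simp only [LinearMap.comp_apply, Submodule.mkQ_apply, Module.End.mul_apply,
      Submodule.mapQ_apply, Finsupp.lmapDomain_apply, Finsupp.mapDomain_single,
      mul_assoc]

end Induction

/-- The outer tensor product `ℂ[Inj(V, I)] ⊗ ℂ[Inj(J, J)]` of the permutation
representations of `Sym(I)` (on injections `V ↪ I`) and of `Sym(J)` (on injections
`J ↪ J`), as a representation of `Sym(I) × Sym(J)`. -/
noncomputable def outerPermRep (I J V : Type) :
    Representation ℂ (Equiv.Perm I × Equiv.Perm J)
      (((V ↪ I) →₀ ℂ) ⊗[ℂ] ((J ↪ J) →₀ ℂ)) :=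
  Representation.tprod
    ((ofMulActionFinsupp ℂ (Equiv.Perm I) (V ↪ I)).comp
      (MonoidHom.fst (Equiv.Perm I) (Equiv.Perm J)))
    ((ofMulActionFinsupp ℂ (Equiv.Perm J) (J ↪ J)).comp
      (MonoidHom.snd (Equiv.Perm I) (Equiv.Perm J)))

/-- The induced representation
`ℂ[Sym(I ⊔ J)] ⊗_{ℂ[Sym(I) × Sym(J)]} (ℂ[Inj(V, I)] ⊗ ℂ[Inj(J, J)])`:
underlying module. -/
noncomputable def IndOuter (I J V : Type) : Type :=
  @IndModule ℂ _ (Equiv.Perm I × Equiv.Perm J) (Equiv.Perm (I ⊕ J)) _ _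
    (((V ↪ I) →₀ ℂ) ⊗[ℂ] ((J ↪ J) →₀ ℂ)) TensorProduct.addCommGroup
    TensorProduct.leftModule (Equiv.Perm.sumCongrHom I J) (outerPermRep I J V)

noncomputable instance (I J V : Type) : AddCommGroup (IndOuter I J V) :=
  inferInstanceAs (AddCommGroup (@IndModule ℂ _ (Equiv.Perm I × Equiv.Perm J)
    (Equiv.Perm (I ⊕ J)) _ _ (((V ↪ I) →₀ ℂ) ⊗[ℂ] ((J ↪ J) →₀ ℂ))
    TensorProduct.addCommGroup TensorProduct.leftModule (Equiv.Perm.sumCongrHom I J)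
    (outerPermRep I J V)))

noncomputable instance (I J V : Type) : Module ℂ (IndOuter I J V) :=
  inferInstanceAs (Module ℂ (@IndModule ℂ _ (Equiv.Perm I × Equiv.Perm J)
    (Equiv.Perm (I ⊕ J)) _ _ (((V ↪ I) →₀ ℂ) ⊗[ℂ] ((J ↪ J) →₀ ℂ))
    TensorProduct.addCommGroup TensorProduct.leftModule (Equiv.Perm.sumCongrHom I J)
    (outerPermRep I J V)))

/-- The induced representation
`ℂ[Sym(I ⊔ J)] ⊗_{ℂ[Sym(I) × Sym(J)]} (ℂ[Inj(V, I)] ⊗ ℂ[Inj(J, J)])`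
of `Sym(I ⊔ J)`. -/
noncomputable def indOuterRep (I J V : Type) :
    Representation ℂ (Equiv.Perm (I ⊕ J)) (IndOuter I J V) :=
  @indRep ℂ _ (Equiv.Perm I × Equiv.Perm J) (Equiv.Perm (I ⊕ J)) _ _
    (((V ↪ I) →₀ ℂ) ⊗[ℂ] ((J ↪ J) →₀ ℂ)) TensorProduct.addCommGroup
    TensorProduct.leftModule (Equiv.Perm.sumCongrHom I J) (outerPermRep I J V)

theorem ofMulActionFinsupp_single {k G Y : Type*} [Semiring k] [Monoid G] [MulAction G Y]
    (g : G) (y : Y) (a : k) :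
    ofMulActionFinsupp k G Y g (Finsupp.single y a) = Finsupp.single (g • y) a := by
  simp [ofMulActionFinsupp]

namespace IndModule

variable {k : Type*} [CommRing k] {H G : Type*} [Group H] [Group G]
  {M : Type*} [AddCommGroup M] [Module k M] (ι : H →* G) (τ : Representation k H M)

noncomputable def mk (g : G) (m : M) : IndModule ι τ :=
  Submodule.Quotient.mk (Finsupp.single g m)

theorem mk_mul (g : G) (h : H) (m : M) : mk ι τ (g * ι h) m = mk ι τ g (τ h m) :=
  (Submodule.Quotient.eq _).mpr (Submodule.subset_span ⟨g, h, m, rfl⟩)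

theorem indRep_mk (s g : G) (m : M) : indRep ι τ s (mk ι τ g m) = mk ι τ (s * g) m := by
  simp [indRep, mk, Submodule.mapQ_apply, Finsupp.lmapDomain_apply, Finsupp.mapDomain_single]

variable {ι τ} in
theorem hom_ext {X W : Type*} [AddCommGroup W] [Module k W] (b : Module.Basis X k M)
    {φ φ' : IndModule ι τ →ₗ[k] W} (h : ∀ g x, φ (mk ι τ g (b x)) = φ' (mk ι τ g (b x))) :
    φ = φ' :=
  Submodule.linearMap_qext _ <| Finsupp.lhom_ext' fun g => b.ext fun x => h g x

section Lift

variable {W : Type*} [AddCommGroup W] [Module k W] (ρ : Representation k G W)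
  (f : M →ₗ[k] W) (hf : ∀ h m, f (τ h m) = ρ (ι h) (f m))

/-- Frobenius reciprocity. -/
noncomputable def lift : IndModule ι τ →ₗ[k] W :=
  (indRel ι τ).liftQ (Finsupp.lsum k fun g => ρ g ∘ₗ f) <| by
    rw [indRel, Submodule.span_le]
    rintro _ ⟨g, h, m, rfl⟩
    rw [SetLike.mem_coe, LinearMap.mem_ker, map_sub, Finsupp.lsum_single,
      Finsupp.lsum_single]
    simp [hf]

theorem lift_mk (g : G) (m : M) : lift ι τ ρ f hf (mk ι τ g m) = ρ g (f m) := by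
  simp [lift, mk]

theorem lift_indRep (s : G) (z : IndModule ι τ) :
    lift ι τ ρ f hf (indRep ι τ s z) = ρ s (lift ι τ ρ f hf z) := by
  obtain ⟨x, rfl⟩ := Submodule.Quotient.mk_surjective _ z
  induction x using Finsupp.induction_linear with
  | zero => simp
  | add x y hx hy => simp only [Submodule.Quotient.mk_add, map_add, hx, hy]
  | single g m =>
    rw [show Submodule.Quotient.mk (Finsupp.single g m) = mk ι τ g m from rfl, indRep_mk,
      lift_mk, lift_mk, map_mul, Module.End.mul_apply]

end Lift

variable {ι τ} {X Y : Type*} [MulAction H X] [MulAction G Y] {b : Module.Basis X k M}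
  {ψ : X → Y}

noncomputable def toFinsupp (hb : ∀ h x, τ h (b x) = b (h • x))
    (hψ : ∀ h x, ψ (h • x) = ι h • ψ x) : IndModule ι τ →ₗ[k] (Y →₀ k) :=
  lift ι τ (ofMulActionFinsupp k G Y) (b.constr k fun x => Finsupp.single (ψ x) 1)
    fun h => LinearMap.congr_fun <| b.ext
      (f₁ := (b.constr k fun x => Finsupp.single (ψ x) 1) ∘ₗ τ h)
      (f₂ := ofMulActionFinsupp k G Y (ι h) ∘ₗ b.constr k fun x => Finsupp.single (ψ x) 1)
      fun x => by simp [hb, hψ, ofMulActionFinsupp_single]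

variable (hb : ∀ h x, τ h (b x) = b (h • x)) (hψ : ∀ h x, ψ (h • x) = ι h • ψ x)

theorem toFinsupp_mk (g : G) (x : X) :
    toFinsupp hb hψ (mk ι τ g (b x)) = Finsupp.single (g • ψ x) 1 := by
  simp [toFinsupp, lift_mk, ofMulActionFinsupp_single]

theorem toFinsupp_indRep (s : G) (z : IndModule ι τ) :
    toFinsupp hb hψ (indRep ι τ s z) = ofMulActionFinsupp k G Y s (toFinsupp hb hψ z) :=
  lift_indRep ..

include hb in
theorem mk_eq_of_smul_eq
    (hfib : ∀ (s : G) x x', s • ψ x = ψ x' → ∃ h, ι h = s ∧ h • x = x')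
    {g g' : G} {x x' : X} (he : g • ψ x = g' • ψ x') :
    mk ι τ g (b x) = mk ι τ g' (b x') := by
  obtain ⟨h, hs, rfl⟩ := hfib (g'⁻¹ * g) x x' (by rw [mul_smul, he, inv_smul_smul])
  rw [← hb, ← mk_mul, hs, mul_inv_cancel_left]

include hb hψ in
/-- The induced representation of a permutation representation is the permutation
representation on `G ×_H X`, here presented as a `G`-set `Y` together with an `H`-map
`ψ : X → Y` such that `(g, x) ↦ g • ψ x` is onto with fibres the `H`-orbits. -/
theorem exists_equiv_ofMulActionFinsupp (hsurj : ∀ y, ∃ (g : G) (x : X), g • ψ x = y)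
    (hfib : ∀ (s : G) x x', s • ψ x = ψ x' → ∃ h, ι h = s ∧ h • x = x') :
    ∃ e : IndModule ι τ ≃ₗ[k] (Y →₀ k),
      ∀ s z, e (indRep ι τ s z) = ofMulActionFinsupp k G Y s (e z) := by
  choose g x hgx using hsurj
  let inv := Finsupp.linearCombination k fun y => mk ι τ (g y) (b (x y))
  refine ⟨.ofLinearMap (toFinsupp hb hψ) inv ?_ ?_, toFinsupp_indRep hb hψ⟩
  · refine Finsupp.lhom_ext fun y a => ?_
    simp [inv, toFinsupp_mk, hgx]
  · refine hom_ext b fun g' x' => ?_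
    simp only [LinearMap.comp_apply, toFinsupp_mk, inv, Finsupp.linearCombination_single,
      one_smul, LinearMap.id_apply]
    exact mk_eq_of_smul_eq hb hfib (hgx _)

end IndModule

instance Prod.mulActionProd {M N α β : Type*} [Monoid M] [Monoid N] [MulAction M α]
    [MulAction N β] : MulAction (M × N) (α × β) where
  smul p x := (p.1 • x.1, p.2 • x.2)
  one_smul x := Prod.ext (one_smul M x.1) (one_smul N x.2)
  mul_smul p q x := Prod.ext (mul_smul p.1 q.1 x.1) (mul_smul p.2 q.2 x.2)

theorem Prod.smul_mk_prod {M N α β : Type*} [Monoid M] [Monoid N] [MulAction M α]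
    [MulAction N β] (p : M × N) (a : α) (b : β) : p • (a, b) = (p.1 • a, p.2 • b) :=
  rfl

namespace Equiv.Perm

variable {α β I J : Type*}

theorem sumCongrHom_smul_sumMap (st : Perm I × Perm J) (f : α ↪ I) (g : β ↪ J) :
    sumCongrHom I J st • f.sumMap g = (st.1 • f).sumMap (st.2 • g) := by
  ext (a | b) <;> rfl

theorem exists_smul_sumMap_refl_eq [Fintype α] [Fintype I] [Fintype J] (u : α ⊕ J ↪ I ⊕ J) :
    ∃ (σ : Perm (I ⊕ J)) (f : α ↪ I), σ • f.sumMap (Function.Embedding.refl J) = u := by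
  have hcard := Fintype.card_le_of_embedding u
  rw [Fintype.card_sum, Fintype.card_sum, Nat.add_le_add_iff_right] at hcard
  obtain ⟨f⟩ := Function.Embedding.nonempty_of_card_le hcard
  obtain ⟨σ, hσ⟩ := exists_extending_pair _ _ (f.sumMap (.refl J)).injective u.injective
  exact ⟨σ, f, Function.Embedding.ext hσ⟩

theorem exists_sumCongrHom_eq_of_smul_sumMap [Finite I] [Finite J] {σ : Perm (I ⊕ J)}
    {f f' : α ↪ I} {g g' : J ↪ J} (he : σ • f.sumMap g = f'.sumMap g') :
    ∃ st : Perm I × Perm J, sumCongrHom I J st = σ ∧ st • (f, g) = (f', g') := by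
  have hmaps : Set.MapsTo σ (Set.range Sum.inl) (Set.range Sum.inl) := by
    rintro _ ⟨i, rfl⟩
    rcases hi : σ (Sum.inl i) with i' | j
    · exact ⟨i', rfl⟩
    · obtain ⟨j₀, rfl⟩ := (Finite.injective_iff_surjective.mp g'.injective) j
      exact absurd (σ.injective (hi.trans (DFunLike.congr_fun he (Sum.inr j₀)).symm))
        Sum.inl_ne_inr
  obtain ⟨st, rfl⟩ := mem_sumCongrHom_range_of_perm_mapsTo_inl hmaps
  rw [sumCongrHom_smul_sumMap] at he
  refine ⟨st, rfl, ?_⟩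
  rw [Prod.smul_mk_prod, Prod.mk.injEq]
  constructor <;> ext x
  · exact Sum.inl_injective (DFunLike.congr_fun he (Sum.inl x))
  · exact Sum.inr_injective (DFunLike.congr_fun he (Sum.inr x))

end Equiv.Perm

theorem outerPermRep_basis (I J V : Type) (st : Equiv.Perm I × Equiv.Perm J)
    (p : (V ↪ I) × (J ↪ J)) :
    outerPermRep I J V st (Finsupp.basisSingleOne.tensorProduct Finsupp.basisSingleOne p) =
      Finsupp.basisSingleOne.tensorProduct Finsupp.basisSingleOne (st • p) := by
  simp [outerPermRep, Module.Basis.tensorProduct_apply', ofMulActionFinsupp_single]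
  rfl

/-- Let `I, J, V` be finite sets.  The representation of
`Sym(I ⊔ J)` induced, along the natural inclusion `Sym(I) × Sym(J) → Sym(I ⊔ J)`,
from the outer tensor product `ℂ[Inj(V, I)] ⊗ ℂ[Inj(J, J)]` of the permutation
representations of `Sym(I)` and `Sym(J)`, is isomorphic as a representation of
`Sym(I ⊔ J)` to the permutation representation `ℂ[Inj(V ⊔ J, I ⊔ J)]`. -/
theorem stmt8 (I J V : Type) [Fintype I] [Fintype J] [Fintype V] :
    ∃ e : IndOuter I J V ≃ₗ[ℂ] ((V ⊕ J ↪ I ⊕ J) →₀ ℂ),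
      ∀ (σ : Equiv.Perm (I ⊕ J)) (x : IndOuter I J V),
        e (indOuterRep I J V σ x) =
          ofMulActionFinsupp ℂ (Equiv.Perm (I ⊕ J)) (V ⊕ J ↪ I ⊕ J) σ
            (e x) := by
  refine IndModule.exists_equiv_ofMulActionFinsupp (outerPermRep_basis I J V)
    (fun st p => (Equiv.Perm.sumCongrHom_smul_sumMap st p.1 p.2).symm) (fun u => ?_)
    fun _ _ _ he => Equiv.Perm.exists_sumCongrHom_eq_of_smul_sumMap he
  obtain ⟨σ, f, hσ⟩ := Equiv.Perm.exists_smul_sumMap_refl_eq u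
  exact ⟨σ, (f, .refl J), hσ⟩
end

section
/- Let n ∈ ℕ, let ℂ[S_n] be the group algebra over ℂ of the symmetric group S_n on {1, …, n}, and fix a ∈ ℂ. For 1 ≤ i ≤ n define x_i = a·1 + Σ_{j < i} (j i) ∈ ℂ[S_n], where (j i) denotes the transposition swapping j and i, and for 1 ≤ i < n let s_i = (i, i+1). Then: (a) x_i x_j = x_j x_i for all 1 ≤ i, j ≤ n; (b) s_j x_i = x_i s_j whenever 1 ≤ j < n, 1 ≤ i ≤ n and j ∉ {i−1, i}; (c) s_i x_{i+1} = x_i s_i + 1 for all 1 ≤ i < n. -/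
/-
With `J_i = Σ_{j<i} (j i)` the Jucys–Murphy element, `x_i = a + J_i` and `a` is central, so
everything reduces to relations for the `J_i`. Conjugating by a permutation `σ` sends
`(j i)` to `(σ j  σ i)`, so `σ` commutes with `J_i` as soon as it fixes `i` and stabilises
`{j | j < i}`. This gives (b) directly and (a) because `J_i` (for `i < j`) is a sum of such
permutations for `J_j`. For (c), split off the term `(i i+1)` of `J_{i+1}`: it squares to `1`,
and conjugating the remaining terms `(k i+1)` by `(i i+1)` gives the terms `(k i)` of `J_i`.
-/

open scoped Classical

/-- The element `x_i = a·1 + Σ_{j < i} (j i)` of the group algebra `ℂ[S_n]`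
(0-indexed version of the classical generators of the degenerate affine Hecke
algebra under the evaluation homomorphism). -/
noncomputable def xElt (n : ℕ) (a : ℂ) (i : Fin n) :
    MonoidAlgebra ℂ (Equiv.Perm (Fin n)) :=
  a • (1 : MonoidAlgebra ℂ (Equiv.Perm (Fin n))) +
    ∑ j ∈ Finset.univ.filter (fun j : Fin n => j < i),
      MonoidAlgebra.single (Equiv.swap j i) (1 : ℂ)

open Equiv MonoidAlgebra Finset

section JucysMurphy

variable (R : Type*) {α : Type*} [Semiring R] [Fintype α] [LinearOrder α]

noncomputable def jucysMurphy (i : α) : MonoidAlgebra R (Perm α) :=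
  ∑ j ∈ univ.filter (· < i), single (swap j i) 1

variable {R}

theorem commute_single_jucysMurphy {σ : Perm α} {i : α} (hσi : σ i = i)
    (hσ : ∀ k, k < i ↔ σ k < i) :
    Commute (single σ (1 : R)) (jucysMurphy R i) := by
  simp only [Commute, SemiconjBy, jucysMurphy, mul_sum, sum_mul, single_mul_single, mul_one]
  refine sum_equiv σ (by simpa using hσ) fun k _ => ?_
  rw [mul_swap_eq_swap_mul, hσi]

theorem commute_single_swap_jucysMurphy {x y i : α} (hx : x ≠ i) (hy : y ≠ i)
    (hxy : x < i ↔ y < i) :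
    Commute (single (swap x y) (1 : R)) (jucysMurphy R i) := by
  refine commute_single_jucysMurphy (swap_apply_of_ne_of_ne hx.symm hy.symm) fun k => ?_
  rcases eq_or_ne k x with rfl | hkx
  · rw [swap_apply_left, hxy]
  rcases eq_or_ne k y with rfl | hky
  · rw [swap_apply_right, hxy]
  · rw [swap_apply_of_ne_of_ne hkx hky]

theorem jucysMurphy_commute_of_lt {i j : α} (hij : i < j) :
    Commute (jucysMurphy R i) (jucysMurphy R j) :=
  Commute.sum_left _ _ _ fun k hk =>
    have hki : k < i := (mem_filter.1 hk).2
    commute_single_swap_jucysMurphy (hki.trans hij).ne hij.ne (iff_of_true (hki.trans hij) hij)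

theorem jucysMurphy_commute (i j : α) : Commute (jucysMurphy R i) (jucysMurphy R j) := by
  rcases lt_trichotomy i j with hij | rfl | hij
  · exact jucysMurphy_commute_of_lt hij
  · exact Commute.refl _
  · exact (jucysMurphy_commute_of_lt hij).symm

theorem jucysMurphy_eq_of_covBy {i i' : α} (h : i ⋖ i') :
    jucysMurphy R i' =
      single (swap i i') 1 + ∑ k ∈ univ.filter (· < i), single (swap k i') 1 := by
  have hsplit : univ.filter (· < i') = insert i (univ.filter (· < i)) := by
    ext k
    simp [covBy_iff_lt_iff_le_left.1 h, le_iff_lt_or_eq, or_comm]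
  rw [jucysMurphy, hsplit, sum_insert (by simp)]

theorem single_swap_mul_jucysMurphy_of_covBy {i i' : α} (h : i ⋖ i') :
    single (swap i i') (1 : R) * jucysMurphy R i' =
      jucysMurphy R i * single (swap i i') 1 + 1 := by
  rw [jucysMurphy_eq_of_covBy h, mul_add, single_mul_single, swap_mul_self, mul_one,
    ← MonoidAlgebra.one_def, add_comm, jucysMurphy, mul_sum, sum_mul]
  congr 1
  refine sum_congr rfl fun k hk => ?_
  have hki : k < i := (mem_filter.1 hk).2
  rw [single_mul_single, single_mul_single, mul_one, mul_swap_eq_swap_mul,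
    swap_apply_of_ne_of_ne hki.ne (hki.trans h.lt).ne, swap_apply_right]

end JucysMurphy

theorem xElt_eq_algebraMap_add_jucysMurphy (n : ℕ) (a : ℂ) (i : Fin n) :
    xElt n a i = algebraMap ℂ _ a + jucysMurphy ℂ i := by
  rw [Algebra.algebraMap_eq_smul_one]
  rfl

/-- In `ℂ[S_n]`, with `x_i = a + Σ_{j<i} (j i)` and
`s_i = (i, i+1)`:  (a) the `x_i` commute pairwise; (b) `s_j x_i = x_i s_j` when
`j ∉ {i-1, i}`; (c) `s_i x_{i+1} = x_i s_i + 1`.  (These are the defining relations of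
the degenerate affine Hecke algebra of type A, so the assignment
`s_i ↦ (i, i+1)`, `x_i ↦ a + Σ_{j<i}(j i)` is the evaluation homomorphism.) -/
theorem stmt9 (n : ℕ) (a : ℂ) :
    (∀ i j : Fin n, xElt n a i * xElt n a j = xElt n a j * xElt n a i) ∧
      (∀ (i j : Fin n) (hj : (j : ℕ) + 1 < n), (j : ℕ) ≠ (i : ℕ) →
        (j : ℕ) + 1 ≠ (i : ℕ) →
        MonoidAlgebra.single (Equiv.swap j ⟨(j : ℕ) + 1, hj⟩) (1 : ℂ) * xElt n a i =
          xElt n a i *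
            MonoidAlgebra.single (Equiv.swap j ⟨(j : ℕ) + 1, hj⟩) (1 : ℂ)) ∧
      (∀ (i : Fin n) (hi : (i : ℕ) + 1 < n),
        MonoidAlgebra.single (Equiv.swap i ⟨(i : ℕ) + 1, hi⟩) (1 : ℂ) *
            xElt n a ⟨(i : ℕ) + 1, hi⟩ =
          xElt n a i * MonoidAlgebra.single (Equiv.swap i ⟨(i : ℕ) + 1, hi⟩) (1 : ℂ)
            + 1) := by
  simp only [xElt_eq_algebraMap_add_jucysMurphy]
  refine ⟨fun i j => ?_, fun i j hj hji hj1i => ?_, fun i hi => ?_⟩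
  · exact ((Algebra.commute_algebraMap_left a _).add_left
      ((Algebra.commute_algebraMap_right a _).add_right (jucysMurphy_commute i j))).eq
  · refine ((Algebra.commute_algebraMap_right a _).add_right
      (commute_single_swap_jucysMurphy ?_ ?_ ?_)).eq
    · exact Fin.ne_of_val_ne hji
    · exact Fin.ne_of_val_ne hj1i
    · simp only [Fin.lt_def]
      omega
  · rw [mul_add, single_swap_mul_jucysMurphy_of_covBy (by simp), add_mul, ← add_assoc,
      Algebra.commutes]
end

section
/- Let n ∈ ℕ, let ℂ[S_n] be the group algebra over ℂ of the symmetric group S_n on {1, …, n}, and fix a ∈ ℂ. For 1 ≤ i ≤ n define y_i = a·1 + (1/2) Σ_{j ≠ i} (i j) ∈ ℂ[S_n], where (i j) denotes the transposition swapping i and j. Then: (a) σ y_i σ^{-1} = y_{σ(i)} for every σ ∈ S_n and every i; (b) for all i ≠ j, the commutator satisfies [y_i, y_j] = (1/4) Σ_{k ≠ i, j} ( (i j k) − (j i k) ), where (i j k) denotes the 3-cycle sending i ↦ j, j ↦ k, k ↦ i, and (j i k) the 3-cycle sending j ↦ i, i ↦ k, k ↦ j. -/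
open scoped Classical

/-- The element `y_i = a·1 + (1/2) Σ_{j ≠ i} (i j)` of the group algebra `ℂ[S_n]`
(image of the generator `y_i` of the degenerate affine Hecke algebra, in its second
presentation, under the evaluation homomorphism). -/
noncomputable def yElt (n : ℕ) (a : ℂ) (i : Fin n) :
    MonoidAlgebra ℂ (Equiv.Perm (Fin n)) :=
  a • (1 : MonoidAlgebra ℂ (Equiv.Perm (Fin n))) +
    (1 / 2 : ℂ) • ∑ j ∈ Finset.univ.filter (fun j : Fin n => j ≠ i),
      MonoidAlgebra.single (Equiv.swap i j) (1 : ℂ)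

/-!
Write `T_i = Σ_{k ≠ i} (i k)`. Part (a) is the rule `σ (i k) σ⁻¹ = (σi σk)` applied termwise, and
the scalar part of `y_i` drops out of commutators, so (b) reduces to
`[T_i, T_j] = Σ_{k ≠ i,j} ((i j k) − (j i k))`. Split `T_i = (i j) + A_i` and `T_j = (i j) + A_j`
with `A_i = Σ_{k ≠ i,j} (i k)`. Conjugation by `(i j)` exchanges `A_i` and `A_j`, so
`[(i j), A_j] + [A_i, (i j)] = 2 Σ_k ((i j k) − (j i k))`; in `[A_i, A_j]` only the pairs
`(i k)`, `(j k)` with the same `k` fail to commute, and they contribute `Σ_k ((j i k) − (i j k))`.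
-/

open Equiv Finset MonoidAlgebra

section ThreeCycles

variable {α : Type*} [DecidableEq α] {x y z : α}

theorem Equiv.swap_mul_swap_eq_swap_mul_swap_of_ne (hxz : x ≠ z) (hyz : y ≠ z) :
    swap x z * swap x y = swap x y * swap y z := by
  rw [swap_mul_eq_mul_swap, swap_inv, swap_apply_left,
    swap_apply_of_ne_of_ne hxz.symm hyz.symm]

theorem Equiv.swap_mul_swap_eq_swap_mul_swap_of_ne' (hxy : x ≠ y) (hxz : x ≠ z) (hyz : y ≠ z) :
    swap x z * swap y z = swap x y * swap x z := by
  rw [swap_mul_eq_mul_swap, swap_inv, swap_apply_of_ne_of_ne hxy hxz, swap_apply_right,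
    swap_comm x y, swap_mul_swap_eq_swap_mul_swap_of_ne hyz hxz]

end ThreeCycles

theorem Finset.filter_ne_eq_insert {α : Type*} [DecidableEq α] (s : Finset α) {i j : α}
    (hij : i ≠ j) (hj : j ∈ s) :
    s.filter (· ≠ i) = insert j (s.filter fun k => k ≠ i ∧ k ≠ j) := by
  ext k
  by_cases hkj : k = j
  · subst hkj; simp [hj, hij.symm]
  · simp [hkj]

theorem smul_one_add_smul_mul_sub_mul {R A : Type*} [CommRing R] [Ring A] [Algebra R A]
    (a b c d : R) (x y : A) :
    (a • 1 + c • x) * (b • 1 + d • y) - (b • 1 + d • y) * (a • 1 + c • x) =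
      (c * d) • (x * y - y * x) := by
  simp only [mul_add, add_mul, smul_mul_smul_comm, one_mul, mul_one]
  module

theorem mul_smul_one_add_smul_mul {R A : Type*} [CommSemiring R] [Semiring A] [Algebra R A]
    {u v : A} (huv : u * v = 1) (a c : R) (x : A) :
    u * (a • 1 + c • x) * v = a • 1 + c • (u * x * v) := by
  rw [mul_add, add_mul, mul_smul_comm, mul_one, smul_mul_assoc, huv, mul_smul_comm, smul_mul_assoc]

section SwapSum

variable {R α : Type*} [DecidableEq α]

theorem sum_single_swap_mul_sub_mul [Ring R] {i j : α} (hij : i ≠ j) {K : Finset α}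
    (hiK : i ∉ K) (hjK : j ∉ K) :
    (∑ k ∈ K, single (swap i k) (1 : R)) * ∑ k ∈ K, single (swap j k) 1 -
        (∑ k ∈ K, single (swap j k) (1 : R)) * ∑ k ∈ K, single (swap i k) 1 =
      ∑ k ∈ K, single (swap i j * swap i k) 1 - ∑ k ∈ K, single (swap i j * swap j k) 1 := by
  have hBA : (∑ k ∈ K, single (swap j k) (1 : R)) * ∑ k ∈ K, single (swap i k) 1 =
      ∑ k ∈ K, ∑ l ∈ K, single (swap j l * swap i k) 1 := by
    rw [sum_mul_sum, sum_comm]; simp only [single_mul_single, mul_one]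
  simp only [hBA, sum_mul_sum, single_mul_single, mul_one, ← sum_sub_distrib]
  refine sum_congr rfl fun k hk => ?_
  have hki : k ≠ i := ne_of_mem_of_not_mem hk hiK
  have hkj : k ≠ j := ne_of_mem_of_not_mem hk hjK
  rw [sum_eq_single_of_mem k hk]
  · rw [swap_mul_swap_eq_swap_mul_swap_of_ne' hij hki.symm hkj.symm,
      swap_mul_swap_eq_swap_mul_swap_of_ne' hij.symm hkj.symm hki.symm, swap_comm j i]
  · intro l hl hlk
    have hli : l ≠ i := ne_of_mem_of_not_mem hl hiK
    have hlj : l ≠ j := ne_of_mem_of_not_mem hl hjK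
    have hnodup : [i, k, j, l].Nodup := by
      simp [hij, hki.symm, hli.symm, hkj, hlk.symm, hlj.symm]
    rw [(Perm.disjoint_swap_swap hnodup).commute.eq, sub_self]

variable (R) [Fintype α]

noncomputable def swapSum [Semiring R] (i : α) : MonoidAlgebra R (Perm α) :=
  ∑ k ∈ univ.filter (· ≠ i), single (swap i k) 1

variable {R}

theorem single_mul_swapSum_mul_single_inv [Semiring R] (σ : Perm α) (i : α) :
    single σ (1 : R) * swapSum R i * single σ⁻¹ 1 = swapSum R (σ i) := by
  simp only [swapSum, mul_sum, sum_mul, single_mul_single, mul_one]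
  refine sum_equiv σ (fun k => by simp) fun k _ => ?_
  rw [swap_apply_apply]

theorem swapSum_mul_sub_mul [Ring R] {i j : α} (hij : i ≠ j) :
    swapSum R i * swapSum R j - swapSum R j * swapSum R i =
      ∑ k ∈ univ.filter (fun k => k ≠ i ∧ k ≠ j),
        (single (swap i j * swap j k) (1 : R) - single (swap i j * swap i k) 1) := by
  set K := univ.filter (fun k => k ≠ i ∧ k ≠ j) with hK
  have memK {k : α} : k ∈ K ↔ k ≠ i ∧ k ≠ j := by simp [hK]
  set s : MonoidAlgebra R (Perm α) := single (swap i j) 1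
  set A : MonoidAlgebra R (Perm α) := ∑ k ∈ K, single (swap i k) 1
  set B : MonoidAlgebra R (Perm α) := ∑ k ∈ K, single (swap j k) 1
  have hi : swapSum R i = s + A := by
    rw [swapSum, filter_ne_eq_insert _ hij (mem_univ j), sum_insert (by simp)]
  have hj : swapSum R j = s + B := by
    have : univ.filter (fun k => k ≠ j ∧ k ≠ i) = K := by simp only [hK, and_comm]
    rw [swapSum, filter_ne_eq_insert _ hij.symm (mem_univ i), sum_insert (by simp), this,
      swap_comm]
  have hsB : s * B = ∑ k ∈ K, single (swap i j * swap j k) 1 := by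
    simp only [s, B, mul_sum, single_mul_single, mul_one]
  have hAs : A * s = ∑ k ∈ K, single (swap i j * swap j k) 1 := by
    simp only [A, s, sum_mul, single_mul_single, mul_one]
    refine sum_congr rfl fun k hk => ?_
    rw [swap_mul_swap_eq_swap_mul_swap_of_ne (memK.mp hk).1.symm (memK.mp hk).2.symm]
  have hsA : s * A = ∑ k ∈ K, single (swap i j * swap i k) 1 := by
    simp only [s, A, mul_sum, single_mul_single, mul_one]
  have hBs : B * s = ∑ k ∈ K, single (swap i j * swap i k) 1 := by
    simp only [B, s, sum_mul, single_mul_single, mul_one]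
    refine sum_congr rfl fun k hk => ?_
    rw [swap_comm i j, swap_mul_swap_eq_swap_mul_swap_of_ne (memK.mp hk).2.symm (memK.mp hk).1.symm]
  have hAB := sum_single_swap_mul_sub_mul (R := R) hij (K := K) (by simp [memK]) (by simp [memK])
  calc swapSum R i * swapSum R j - swapSum R j * swapSum R i
      = (s * B - B * s) + (A * s - s * A) + (A * B - B * A) := by rw [hi, hj]; noncomm_ring
    _ = _ := by rw [hsB, hBs, hAs, hsA, hAB, sum_sub_distrib]; abel

end SwapSum

theorem yElt_eq_smul_one_add_smul_swapSum (n : ℕ) (a : ℂ) (i : Fin n) :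
    yElt n a i = a • 1 + (1 / 2 : ℂ) • swapSum ℂ i := rfl

/-- `swap i j * swap j k` is the 3-cycle `(i j k)` and `swap i j * swap i k` is `(j i k)`. -/
theorem stmt10 (n : ℕ) (a : ℂ) :
    (∀ (σ : Equiv.Perm (Fin n)) (i : Fin n),
        MonoidAlgebra.single σ (1 : ℂ) * yElt n a i *
            MonoidAlgebra.single σ⁻¹ (1 : ℂ) =
          yElt n a (σ i)) ∧
      (∀ i j : Fin n, i ≠ j →
        yElt n a i * yElt n a j - yElt n a j * yElt n a i =
          (1 / 4 : ℂ) •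
            ∑ k ∈ Finset.univ.filter (fun k : Fin n => k ≠ i ∧ k ≠ j),
              (MonoidAlgebra.single (Equiv.swap i j * Equiv.swap j k) (1 : ℂ) -
                MonoidAlgebra.single (Equiv.swap i j * Equiv.swap i k) (1 : ℂ))) := by
  simp only [yElt_eq_smul_one_add_smul_swapSum]
  refine ⟨fun σ i => ?_, fun i j hij => ?_⟩
  · have hσ : single σ (1 : ℂ) * single σ⁻¹ 1 = 1 := by
      rw [single_mul_single, mul_inv_cancel, mul_one]; exact one_def.symm
    rw [mul_smul_one_add_smul_mul hσ, single_mul_swapSum_mul_single_inv]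
  · rw [smul_one_add_smul_mul_sub_mul, swapSum_mul_sub_mul hij]
    norm_num
end

section
/- Let k be an algebraically closed field of characteristic zero, G a finite abelian group, and n ∈ ℕ. Let W = G^n ⋊ S_n be the wreath product, where S_n = Equiv.Perm (Fin n) acts on G^n = (Fin n → G) by permuting coordinates: (σ · g)_i = g_{σ^{-1}(i)}. Then for every finite-dimensional irreducible k-linear representation V of W there exist: a function χ : Fin n → Hom(G, kˣ) assigning to each coordinate a character of G; the stabilizer subgroup H = { σ ∈ S_n : χ ∘ σ = χ } of χ in S_n, giving the subgroup G^n ⋊ H of W; and a finite-dimensional irreducible k-linear representation (M, ρ) of H, such that V is isomorphic as a W-representation to the induced representation k[W] ⊗_{k[G^n ⋊ H]} N, where N is the representation of G^n ⋊ H on M in which the element (g, σ) acts by the scalar Π_{i} χ_i(g_i) times ρ(σ). -/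
/-- The action of the symmetric group `S_n` on `G^n = (Fin n → G)` by permutation of
the coordinates: `(σ • g) i = g (σ⁻¹ i)`. -/
def wreathPhi (G : Type) [Group G] (n : ℕ) :
    Equiv.Perm (Fin n) →* MulAut (Fin n → G) where
  toFun σ := { Equiv.arrowCongr σ (Equiv.refl G) with map_mul' := fun _ _ => rfl }
  map_one' := by ext g i; rfl
  map_mul' σ τ := by ext g i; rfl

/-- The wreath product `G ≀ S_n = G^n ⋊ S_n`. -/
def Wreath (G : Type) [Group G] (n : ℕ) : Type :=
  (Fin n → G) ⋊[wreathPhi G n] Equiv.Perm (Fin n)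

instance (G : Type) [Group G] (n : ℕ) : Group (Wreath G n) :=
  inferInstanceAs (Group ((Fin n → G) ⋊[wreathPhi G n] Equiv.Perm (Fin n)))

/-- The stabilizer `H = {σ ∈ S_n : χ ∘ σ = χ}` of a tuple of characters
`χ : Fin n → Hom(G, kˣ)`. -/
def stabSubgroup (k : Type) [Field k] (G : Type) [Group G] (n : ℕ)
    (χ : Fin n → (G →* kˣ)) : Subgroup (Equiv.Perm (Fin n)) where
  carrier := {σ | χ ∘ σ = χ}
  one_mem' := by ext i; rfl
  mul_mem' := by
    intro σ τ hσ hτ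
    have : χ ∘ ⇑(σ * τ) = (χ ∘ σ) ∘ τ := rfl
    simp only [Set.mem_setOf_eq] at hσ hτ ⊢
    rw [this, hσ, hτ]
  inv_mem' := by
    intro σ hσ
    simp only [Set.mem_setOf_eq] at hσ ⊢
    funext i
    have := congrFun hσ (σ⁻¹ i)
    simpa using this.symm

/-- The subgroup `G^n ⋊ H` of the wreath product `G^n ⋊ S_n`, as a semidirect
product. -/
def SubWreath (k : Type) [Field k] (G : Type) [Group G] (n : ℕ)
    (χ : Fin n → (G →* kˣ)) : Type :=
  (Fin n → G) ⋊[(wreathPhi G n).comp (stabSubgroup k G n χ).subtype]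
    ↥(stabSubgroup k G n χ)

instance (k : Type) [Field k] (G : Type) [Group G] (n : ℕ) (χ : Fin n → (G →* kˣ)) :
    Group (SubWreath k G n χ) :=
  inferInstanceAs (Group ((Fin n → G) ⋊[(wreathPhi G n).comp
    (stabSubgroup k G n χ).subtype] ↥(stabSubgroup k G n χ)))

/-- The inclusion `G^n ⋊ H → G^n ⋊ S_n`. -/
def wreathInc (k : Type) [Field k] (G : Type) [Group G] (n : ℕ)
    (χ : Fin n → (G →* kˣ)) : SubWreath k G n χ →* Wreath G n :=
  SemidirectProduct.map (MonoidHom.id (Fin n → G)) (stabSubgroup k G n χ).subtype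
    (fun _ => rfl)

/-- The representation `N` of `G^n ⋊ H` associated to a tuple of characters `χ` with
stabilizer `H` and a representation `ρM` of `H`:  the element `(g, σ)` acts by the
scalar `Π_i χ_i (g_i)` times `ρM σ`. -/
noncomputable def scaledRep (k : Type) [Field k] (G : Type) [CommGroup G] [Fintype G]
    (n : ℕ) (χ : Fin n → (G →* kˣ)) (d : ℕ)
    (ρM : Representation k ↥(stabSubgroup k G n χ) (Fin d → k)) :
    Representation k (SubWreath k G n χ) (Fin d → k) where
  toFun w := ((∏ i, χ i (w.left i) : kˣ) : k) • ρM w.right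
  map_one' := by
    change ((∏ i, χ i ((1 : Fin n → G) i) : kˣ) : k) • ρM 1 = 1
    simp [SemidirectProduct.one_left, SemidirectProduct.one_right]
  map_mul' w₁ w₂ := by
    have hσ : χ ∘ ⇑(w₁.right : Equiv.Perm (Fin n)) = χ := w₁.right.2
    have key : (∏ i, χ i ((w₁ * w₂).left i)) =
        (∏ i, χ i (w₁.left i)) * ∏ i, χ i (w₂.left i) := by
      have hl : (w₁ * w₂).left =
          w₁.left * (wreathPhi G n (w₁.right : Equiv.Perm (Fin n))) w₂.left := rfl
      rw [hl]
      rw [show (∏ i, χ i ((w₁.left *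
          (wreathPhi G n (w₁.right : Equiv.Perm (Fin n))) w₂.left) i)) =
          (∏ i, χ i (w₁.left i) * χ i (w₂.left ((w₁.right :
            Equiv.Perm (Fin n)).symm i))) from Finset.prod_congr rfl fun i _ => by
          simp [wreathPhi] <;> rfl]
      rw [Finset.prod_mul_distrib]
      congr 1
      rw [← Equiv.prod_comp (w₁.right : Equiv.Perm (Fin n))
        (fun i => χ i (w₂.left ((w₁.right : Equiv.Perm (Fin n)).symm i)))]
      refine Finset.prod_congr rfl fun j _ => ?_
      simp only [Equiv.symm_apply_apply]
      have := congrFun hσ j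
      simp only [Function.comp_apply] at this
      rw [this]
    have hr : (w₁ * w₂).right = w₁.right * w₂.right := rfl
    show (↑(∏ i, χ i ((w₁ * w₂).left i)) : k) • ρM (w₁ * w₂).right =
      ((↑(∏ i, χ i (w₁.left i)) : k) • ρM w₁.right) *
        ((↑(∏ i, χ i (w₂.left i)) : k) • ρM w₂.right)
    rw [hr, key, map_mul, smul_mul_assoc, mul_smul_comm, smul_smul]
    push_cast
    ring_nf

/-- A representation is irreducible if the underlying space is nonzero and has no
invariant submodules other than `⊥` and `⊤`. -/
def IsIrreducibleRep {k Γ V : Type*} [CommRing k] [Monoid Γ] [AddCommGroup V]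
    [Module k V] (ρ : Representation k Γ V) : Prop :=
  (∃ x : V, x ≠ 0) ∧
    ∀ p : Submodule k V, (∀ (g : Γ) (x : V), x ∈ p → ρ g x ∈ p) → p = ⊥ ∨ p = ⊤

/-! Clifford theory for the abelian normal subgroup `A = G^n` of `W = A ⋊ S_n`. As `A` is abelian
and `k` is algebraically closed, `V` has a weight `ψ : A →* kˣ`, and `ψ a = ∏ i, χ i (a i)` for
characters `χ i` of `G`. The stabilizer `H` of `χ` is the stabilizer of `ψ`, so the weight space
`U` of `ψ` is stable under `A ⋊ H`, while a permutation `σ` carries `U` into the weight space of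
`ψ ∘ σ⁻¹`. These weights are distinct for distinct cosets of `H`, so the translates of `U` are
independent and `dim V ≥ [S_n : H] · dim U`. On the other hand `k[W] ⊗_{k[A ⋊ H]} U` is spanned
by `[S_n : H]` translates of `U` and maps onto the irreducible `V`, so this map is an isomorphism.
The same count, applied to an `H`-stable subspace `P ≠ 0` of `U`, whose translates must span `V`,
gives `dim P ≥ dim U`, so `U` is irreducible. -/

section CommonEigenvector

variable {k V ι : Type*} [Field k] [AddCommGroup V] [Module k V]

-- A minimal nonzero subspace stable under all `f i` lies in an eigenspace of each `f i`,
-- because the eigenspaces of `f i` are stable under all `f j`.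
theorem Module.End.exists_common_eigenvector [IsAlgClosed k] [FiniteDimensional k V]
    [Nontrivial V] (f : ι → Module.End k V) (hf : ∀ i j, Commute (f i) (f j)) :
    ∃ v : V, v ≠ 0 ∧ ∃ μ : ι → k, ∀ i, f i v = μ i • v := by
  obtain ⟨p, ⟨hp_ne, hp_inv⟩, hp_min⟩ := (wellFounded_lt (α := Submodule k V)).has_min
    {p | p ≠ ⊥ ∧ ∀ i, ∀ v ∈ p, f i v ∈ p} ⟨⊤, top_ne_bot, fun _ _ _ => trivial⟩
  have h_eigen : ∀ i, ∃ c : k, p ≤ (f i).eigenspace c := by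
    intro i
    have : Nontrivial p := Submodule.nontrivial_iff_ne_bot.mpr hp_ne
    obtain ⟨c, hc⟩ := Module.End.exists_eigenvalue ((f i).restrict (hp_inv i))
    obtain ⟨u, hu⟩ := hc.exists_hasEigenvector
    refine ⟨c, ?_⟩
    set E := p ⊓ (f i).eigenspace c
    have hE_ne : E ≠ ⊥ := by
      refine (Submodule.ne_bot_iff _).mpr ⟨u, ⟨u.2, ?_⟩, fun h => hu.2 (Subtype.ext h)⟩
      have := congrArg Subtype.val (Module.End.mem_eigenspace_iff.mp hu.1)
      exact Module.End.mem_eigenspace_iff.mpr this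
    have hE_inv : ∀ j, ∀ v ∈ E, f j v ∈ E := fun j v hv =>
      ⟨hp_inv j v hv.1, Module.End.mapsTo_genEigenspace_of_comm (hf i j) c 1 hv.2⟩
    have : ¬ E < p := hp_min E ⟨hE_ne, hE_inv⟩
    exact inf_eq_left.mp ((inf_le_left.lt_or_eq).resolve_left this)
  choose μ hμ using h_eigen
  obtain ⟨v, hv, hv0⟩ := (Submodule.ne_bot_iff p).mp hp_ne
  exact ⟨v, hv0, μ, fun i => Module.End.mem_eigenspace_iff.mp (hμ i hv)⟩

end CommonEigenvector

namespace Representation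

variable {k A V : Type*} [Field k] [AddCommGroup V] [Module k V]

section Monoid

variable [Monoid A] (ρ : Representation k A V)

def weightSpace (μ : A → k) : Submodule k V :=
  ⨅ a, Module.End.eigenspace (ρ a) (μ a)

variable {ρ} in
theorem mem_weightSpace {μ : A → k} {v : V} :
    v ∈ ρ.weightSpace μ ↔ ∀ a, ρ a v = μ a • v := by
  simp [weightSpace, Submodule.mem_iInf]

theorem iSupIndep_weightSpace (hρ : ∀ a b, Commute (ρ a) (ρ b)) :
    iSupIndep ρ.weightSpace := by
  refine (Module.End.independent_iInf_maxGenEigenspace_of_forall_mapsTo ρ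
    fun a b μ => Module.End.mapsTo_maxGenEigenspace_of_comm (hρ b a) μ).mono fun μ => ?_
  exact iInf_mono fun a => Module.End.eigenspace_le_maxGenEigenspace

end Monoid

theorem finrank_map_apply [Group A] (ρ : Representation k A V) (a : A) (p : Submodule k V) :
    Module.finrank k (p.map (ρ a)) = Module.finrank k p :=
  (LinearEquiv.ofBijective _ (ρ.apply_bijective a)).finrank_map_eq p

theorem exists_weightSpace_ne_bot [CommGroup A] [IsAlgClosed k] [FiniteDimensional k V]
    [Nontrivial V] (ρ : Representation k A V) :
    ∃ ψ : A →* kˣ, ρ.weightSpace (fun a => (ψ a : k)) ≠ ⊥ := by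
  obtain ⟨v, hv0, μ, hμ⟩ := Module.End.exists_common_eigenvector ρ
    fun a b => (Commute.all a b).map ρ
  have h_smul_inj : ∀ c₁ c₂ : k, c₁ • v = c₂ • v → c₁ = c₂ := fun c₁ c₂ h =>
    smul_left_injective k hv0 h
  have hμ_mul : ∀ a b, μ (a * b) = μ a * μ b := fun a b => h_smul_inj _ _ <| by
    rw [← hμ, map_mul, Module.End.mul_apply, hμ, map_smul, hμ, smul_smul, mul_comm]
  have hμ_one : μ 1 = 1 := h_smul_inj _ _ <| by rw [← hμ, map_one, one_smul]; rfl
  let ψ : A →* kˣ := MonoidHom.toHomUnits ⟨⟨μ, hμ_one⟩, hμ_mul⟩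
  exact ⟨ψ, (Submodule.ne_bot_iff _).mpr ⟨v, mem_weightSpace.mpr hμ, hv0⟩⟩

end Representation

section FinrankISup

variable {k V Q : Type*} [Field k] [AddCommGroup V] [Module k V] [Fintype Q]
  [DecidableEq Q] {p : Q → Submodule k V} [∀ q, FiniteDimensional k (p q)]

theorem Submodule.finrank_iSup_le_sum :
    Module.finrank k ↥(⨆ q, p q) ≤ ∑ q, Module.finrank k (p q) := by
  rw [Submodule.iSup_eq_range_dfinsupp_lsum, ← Module.finrank_pi_fintype,
    ← (DFinsupp.linearEquivFunOnFintype (R := k)).finrank_eq]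
  exact LinearMap.finrank_range_le _

theorem iSupIndep.sum_finrank_le [FiniteDimensional k V] (hp : iSupIndep p) :
    ∑ q, Module.finrank k (p q) ≤ Module.finrank k V := by
  rw [← Module.finrank_pi_fintype, ← (DFinsupp.linearEquivFunOnFintype (R := k)).finrank_eq]
  exact LinearMap.finrank_le_finrank_of_injective hp.dfinsupp_lsum_injective

end FinrankISup

section Induction

variable {k H Γ M V : Type*} [Field k] [Group H] [Group Γ]
  [AddCommGroup M] [Module k M] [AddCommGroup V] [Module k V]
  {ι : H →* Γ} {τ : Representation k H M} {ρ : Representation k Γ V}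

theorem indModule_mk_single_mul (g : Γ) (h : H) (m : M) :
    (Submodule.Quotient.mk (Finsupp.single (g * ι h) m) : IndModule ι τ) =
      Submodule.Quotient.mk (Finsupp.single g (τ h m)) :=
  (Submodule.Quotient.eq _).mpr (Submodule.subset_span ⟨g, h, m, rfl⟩)

theorem indRep_mk_single (g g' : Γ) (m : M) :
    indRep ι τ g (Submodule.Quotient.mk (Finsupp.single g' m)) =
      Submodule.Quotient.mk (Finsupp.single (g * g') m) := by
  simp [indRep, Submodule.mapQ_apply, Finsupp.lmapDomain_apply, Finsupp.mapDomain_single]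

/-- Frobenius reciprocity: the `Γ`-equivariant extension `k[Γ] ⊗_{k[H]} M → V` of an
`H`-equivariant map `M → V`. -/
noncomputable def indLift (j : M →ₗ[k] V) (hj : ∀ h m, j (τ h m) = ρ (ι h) (j m)) :
    IndModule ι τ →ₗ[k] V :=
  (indRel ι τ).liftQ (Finsupp.lsum k fun g => ρ g ∘ₗ j) <| by
    rw [indRel, Submodule.span_le]
    rintro _ ⟨g, h, m, rfl⟩
    simp only [SetLike.mem_coe, LinearMap.mem_ker, map_sub, Finsupp.lsum_single,
      LinearMap.comp_apply, map_mul, Module.End.mul_apply, hj, sub_self]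

variable {j : M →ₗ[k] V} (hj : ∀ h m, j (τ h m) = ρ (ι h) (j m))

theorem indLift_mk_single (g : Γ) (m : M) :
    indLift j hj (Submodule.Quotient.mk (Finsupp.single g m)) = ρ g (j m) := by
  simp [indLift]

theorem indLift_indRep (g : Γ) (y : IndModule ι τ) :
    indLift j hj (indRep ι τ g y) = ρ g (indLift j hj y) := by
  obtain ⟨z, rfl⟩ := Submodule.Quotient.mk_surjective _ y
  induction z using Finsupp.induction_linear with
  | zero => simp
  | add f f' hf hf' => simp only [Submodule.Quotient.mk_add, map_add, hf, hf']
  | single g' m => rw [indRep_mk_single, indLift_mk_single, indLift_mk_single, map_mul,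
      Module.End.mul_apply]

variable {Q : Type*} (r : Q → Γ) (hr : ∀ g, ∃ q h, g = r q * ι h)
include hr

theorem indModule_finite_and_finrank_le [Fintype Q] [FiniteDimensional k M] :
    FiniteDimensional k (IndModule ι τ) ∧
      Module.finrank k (IndModule ι τ) ≤ Fintype.card Q * Module.finrank k M := by
  classical
  let S : (Q → M) →ₗ[k] IndModule ι τ :=
    LinearMap.lsum k (fun _ => M) k fun q => (indRel ι τ).mkQ ∘ₗ Finsupp.lsingle (r q)
  have hS : Function.Surjective S := by
    rw [← LinearMap.range_eq_top, eq_top_iff]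
    rintro y -
    obtain ⟨z, rfl⟩ := Submodule.Quotient.mk_surjective _ y
    induction z using Finsupp.induction_linear with
    | zero => exact zero_mem _
    | add f f' hf hf' => exact add_mem hf hf'
    | single g m =>
      obtain ⟨q, h, rfl⟩ := hr g
      refine ⟨Pi.single q (τ h m), ?_⟩
      rw [indModule_mk_single_mul]
      simp [S, Pi.single_apply, apply_ite]
  have : FiniteDimensional k (IndModule ι τ) := Module.Finite.of_surjective S hS
  refine ⟨this, (LinearMap.finrank_range_le S).trans_eq' ?_ |>.trans_eq ?_⟩
  · rw [LinearMap.range_eq_top.mpr hS, finrank_top]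
  · simp [Module.finrank_pi_fintype]

variable (hρ : IsIrreducibleRep ρ) (hj_inj : Function.Injective j)
include hj hρ hj_inj

theorem iSup_map_translates_eq_top {P : Submodule k M} (hP : ∀ h m, m ∈ P → τ h m ∈ P)
    (hP0 : P ≠ ⊥) : ⨆ q, (P.map j).map (ρ (r q)) = ⊤ := by
  refine (hρ.2 _ fun g x hx => ?_).resolve_left ?_
  · induction hx using Submodule.iSup_induction' with
    | mem q x hx =>
      obtain ⟨_, ⟨m, hm, rfl⟩, rfl⟩ := hx
      obtain ⟨q', h, hq'⟩ := hr (g * r q)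
      rw [← Module.End.mul_apply, ← map_mul, hq', map_mul, Module.End.mul_apply, ← hj]
      exact Submodule.mem_iSup_of_mem q' ⟨_, ⟨_, hP h m hm, rfl⟩, rfl⟩
    | zero => simp
    | add x y _ _ hx hy => rw [map_add]; exact add_mem hx hy
  · obtain ⟨q, -⟩ := hr 1
    obtain ⟨m, hm, hm0⟩ := P.ne_bot_iff.mp hP0
    intro h_bot
    have hmem : ρ (r q) (j m) ∈ ⨆ q, (P.map j).map (ρ (r q)) :=
      Submodule.mem_iSup_of_mem q ⟨j m, ⟨m, hm, rfl⟩, rfl⟩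
    rw [h_bot, Submodule.mem_bot, ← map_zero (ρ (r q)), (ρ.apply_bijective _).1.eq_iff,
      ← map_zero j, hj_inj.eq_iff] at hmem
    exact hm0 hmem

theorem finrank_le_card_mul_finrank [Fintype Q] [FiniteDimensional k V] [FiniteDimensional k M]
    {P : Submodule k M} (hP : ∀ h m, m ∈ P → τ h m ∈ P)
    (hP0 : P ≠ ⊥) : Module.finrank k V ≤ Fintype.card Q * Module.finrank k P := by
  classical
  calc Module.finrank k V = Module.finrank k ↥(⨆ q, (P.map j).map (ρ (r q))) := by
        rw [iSup_map_translates_eq_top hj r hr hρ hj_inj hP hP0, finrank_top]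
    _ ≤ ∑ q, Module.finrank k ↥((P.map j).map (ρ (r q))) := Submodule.finrank_iSup_le_sum
    _ ≤ ∑ _q : Q, Module.finrank k P := Finset.sum_le_sum fun q _ =>
        (Submodule.finrank_map_le _ _).trans (Submodule.finrank_map_le _ _)
    _ = Fintype.card Q * Module.finrank k P := by simp

theorem bijective_indLift_and_isIrreducibleRep [Fintype Q] [FiniteDimensional k V]
    [FiniteDimensional k M] [Nontrivial M]
    (hdim : Fintype.card Q * Module.finrank k M ≤ Module.finrank k V) :
    Function.Bijective (indLift j hj) ∧ IsIrreducibleRep τ := by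
  obtain ⟨_, h_ind_le⟩ := indModule_finite_and_finrank_le r hr (τ := τ)
  have h_surj : Function.Surjective (indLift j hj) := by
    rw [← LinearMap.range_eq_top, eq_top_iff,
      ← iSup_map_translates_eq_top hj r hr hρ hj_inj (P := ⊤) (fun _ _ _ => trivial) top_ne_bot]
    refine iSup_le fun q => ?_
    rintro _ ⟨_, ⟨m, -, rfl⟩, rfl⟩
    exact ⟨_, indLift_mk_single hj (r q) m⟩
  have h_card_pos : 0 < Fintype.card Q := Fintype.card_pos_iff.mpr ⟨(hr 1).choose⟩
  refine ⟨⟨?_, h_surj⟩, exists_ne 0, fun P hP => or_iff_not_imp_left.mpr fun hP0 => ?_⟩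
  · refine (LinearMap.injective_iff_surjective_of_finrank_eq_finrank
      (h_ind_le.trans hdim |>.antisymm ?_)).mpr h_surj
    exact LinearMap.finrank_range_le _ |>.trans_eq' <| by
      rw [LinearMap.range_eq_top.mpr h_surj, finrank_top]
  · refine Submodule.eq_top_of_finrank_eq (le_antisymm (Submodule.finrank_le P) ?_)
    exact le_of_mul_le_mul_left
      (hdim.trans (finrank_le_card_mul_finrank hj r hr hρ hj_inj hP hP0)) h_card_pos

end Induction

namespace SemidirectProduct

open Representation

section Group

variable {N K : Type*} [Group N] [Group K] {φ : K →* MulAut N}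

theorem inl_mul_inr (a : N) (σ : K) :
    (inl a : N ⋊[φ] K) * inr σ = inr σ * inl (φ σ⁻¹ a) := by
  rw [inl_aut, inv_inv, ← mul_assoc, ← mul_assoc, ← map_mul, mul_inv_cancel, map_one, one_mul]

theorem exists_eq_inr_out_mul_map_subtype (H : Subgroup K) (w : N ⋊[φ] K) :
    ∃ (q : K ⧸ H) (x : N ⋊[φ.comp H.subtype] H),
      w = inr q.out * map (MonoidHom.id N) H.subtype (fun _ => rfl) x := by
  set σ := (w.right : K ⧸ H).out
  have hσ : σ⁻¹ * w.right ∈ H := QuotientGroup.eq.mp (QuotientGroup.out_eq' _)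
  refine ⟨w.right, ⟨φ σ⁻¹ w.left, ⟨σ⁻¹ * w.right, hσ⟩⟩, ?_⟩
  ext <;> simp [map, σ]

variable {k V : Type*} [Field k] [AddCommGroup V] [Module k V]
  (ρ : Representation k (N ⋊[φ] K) V)

theorem map_inr_weightSpace_le (μ : N → k) (σ : K) :
    (weightSpace (ρ.comp inl) μ).map (ρ (inr σ)) ≤
      weightSpace (ρ.comp inl) fun a => μ (φ σ⁻¹ a) := by
  intro _ ⟨v, hv, hw⟩
  rw [SetLike.mem_coe, mem_weightSpace] at hv
  rw [← hw, mem_weightSpace]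
  intro a
  simp only [MonoidHom.comp_apply] at hv ⊢
  rw [← Module.End.mul_apply, ← map_mul, inl_mul_inr, map_mul, Module.End.mul_apply, hv,
    map_smul]

variable (ψ : N →* kˣ) {H : Subgroup K} (hH : ∀ σ, σ ∈ H ↔ ∀ a, ψ (φ σ a) = ψ a)
include hH

theorem inr_mem_weightSpace {σ : K} (hσ : σ ∈ H) {v : V}
    (hv : v ∈ weightSpace (ρ.comp inl) fun a => (ψ a : k)) :
    ρ (inr σ) v ∈ weightSpace (ρ.comp inl) fun a => (ψ a : k) := by
  have := map_inr_weightSpace_le ρ _ σ ⟨v, hv, rfl⟩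
  simpa only [(hH _).mp (inv_mem hσ)] using this

theorem map_subtype_apply_of_mem_weightSpace (x : N ⋊[φ.comp H.subtype] H) {v : V}
    (hv : v ∈ weightSpace (ρ.comp inl) fun a => (ψ a : k)) :
    ρ (map (MonoidHom.id N) H.subtype (fun _ => rfl) x) v =
      (ψ x.left : k) • ρ (inr (x.right : K)) v := by
  have hx : map (MonoidHom.id N) H.subtype (fun _ => rfl) x = inl x.left * inr (x.right : K) := by
    ext <;> simp [map]
  rw [hx, map_mul, Module.End.mul_apply]
  exact mem_weightSpace.mp (inr_mem_weightSpace ρ ψ hH x.right.2 hv) x.left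

theorem injective_weight_comp_out :
    Function.Injective fun (q : K ⧸ H) (a : N) => (ψ (φ q.out⁻¹ a) : k) := by
  intro q q' h
  rw [← QuotientGroup.out_eq' q, ← QuotientGroup.out_eq' q', QuotientGroup.eq, hH]
  intro a
  have := congrFun h (φ q'.out a)
  simp only [← MulAut.mul_apply, ← map_mul, inv_mul_cancel, map_one, MulAut.one_apply] at this
  exact Units.ext this

end Group

theorem card_mul_finrank_weightSpace_le {N K k V : Type*} [CommGroup N] [Group K] [Field k]
    [AddCommGroup V] [Module k V] {φ : K →* MulAut N} {H : Subgroup K}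
    (ρ : Representation k (N ⋊[φ] K) V) (ψ : N →* kˣ)
    (hH : ∀ σ, σ ∈ H ↔ ∀ a, ψ (φ σ a) = ψ a) [FiniteDimensional k V] [Fintype (K ⧸ H)] :
    Fintype.card (K ⧸ H) * Module.finrank k (weightSpace (ρ.comp inl) fun a => (ψ a : k)) ≤
      Module.finrank k V := by
  classical
  have h_indep : iSupIndep fun q : K ⧸ H =>
      (weightSpace (ρ.comp inl) fun a => (ψ a : k)).map (ρ (inr q.out)) :=
    (((iSupIndep_weightSpace (ρ.comp inl)) fun a b => (Commute.all a b).map _).comp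
      (injective_weight_comp_out ψ hH)).mono fun q => map_inr_weightSpace_le ρ _ _
  calc _ = ∑ q : K ⧸ H, Module.finrank k
        ((weightSpace (ρ.comp inl) fun a => (ψ a : k)).map (ρ (inr q.out))) := by
        simp [finrank_map_apply]
    _ ≤ Module.finrank k V := h_indep.sum_finrank_le

end SemidirectProduct

section Wreath

open Representation SemidirectProduct

variable {k : Type} [Field k] {G : Type} [CommGroup G] {n : ℕ}

def componentCharacters (ψ : (Fin n → G) →* kˣ) : Fin n → (G →* kˣ) :=
  fun i => ψ.comp (MonoidHom.mulSingle (fun _ => G) i)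

theorem prod_componentCharacters (ψ : (Fin n → G) →* kˣ) (a : Fin n → G) :
    ∏ i, componentCharacters ψ i (a i) = ψ a := by
  simp only [componentCharacters, MonoidHom.comp_apply, MonoidHom.mulSingle_apply, ← map_prod,
    Finset.univ_prod_mulSingle]

theorem wreathPhi_apply (σ : Equiv.Perm (Fin n)) (a : Fin n → G) (i : Fin n) :
    wreathPhi G n σ a i = a (σ⁻¹ i) :=
  rfl

theorem wreathPhi_mulSingle (σ : Equiv.Perm (Fin n)) (j : Fin n) (g : G) :
    wreathPhi G n σ (Pi.mulSingle j g) = Pi.mulSingle (σ j) g := by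
  change Pi.mulSingle j g ∘ σ.symm = _
  rw [Pi.mulSingle_comp_equiv, Equiv.symm_symm]

theorem mem_stabSubgroup_componentCharacters {ψ : (Fin n → G) →* kˣ} {σ : Equiv.Perm (Fin n)} :
    σ ∈ stabSubgroup k G n (componentCharacters ψ) ↔ ∀ a, ψ (wreathPhi G n σ a) = ψ a := by
  change componentCharacters ψ ∘ σ = componentCharacters ψ ↔ _
  constructor
  · intro hσ a
    rw [← prod_componentCharacters ψ, ← prod_componentCharacters ψ a, ← Equiv.prod_comp σ]
    refine Finset.prod_congr rfl fun j _ => ?_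
    rw [← congrFun hσ j, wreathPhi_apply, Equiv.Perm.coe_inv, Equiv.symm_apply_apply]
    rfl
  · intro h
    funext j
    ext g
    simp only [Function.comp_apply, componentCharacters, MonoidHom.comp_apply,
      MonoidHom.mulSingle_apply, ← wreathPhi_mulSingle, h]

theorem IsIrreducibleRep.of_scaledRep [Fintype G] {χ : Fin n → (G →* kˣ)} {d : ℕ}
    {ρM : Representation k (stabSubgroup k G n χ) (Fin d → k)}
    (h : IsIrreducibleRep (scaledRep k G n χ d ρM)) : IsIrreducibleRep ρM :=
  ⟨h.1, fun p hp => h.2 p fun w x hx => p.smul_mem _ (hp w.right x hx)⟩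

variable {V : Type} [AddCommGroup V] [Module k V]

theorem exists_scaledRep_embedding_weightSpace [Fintype G] [FiniteDimensional k V]
    (ρ : Representation k (Wreath G n) V) (ψ : (Fin n → G) →* kˣ) :
    let U := weightSpace (ρ.comp inl) fun a => (ψ a : k)
    ∃ (ρM : Representation k (stabSubgroup k G n (componentCharacters ψ))
        (Fin (Module.finrank k U) → k)) (j : (Fin (Module.finrank k U) → k) →ₗ[k] V),
      Function.Injective j ∧ ∀ x m,
        j (scaledRep k G n _ _ ρM x m) = ρ (wreathInc k G n (componentCharacters ψ) x) (j m) := by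
  intro U
  set H := stabSubgroup k G n (componentCharacters ψ)
  have hH : ∀ σ, σ ∈ H ↔ ∀ a, ψ (wreathPhi G n σ a) = ψ a :=
    fun _ => mem_stabSubgroup_componentCharacters
  let ρH : Representation k H U := subrepresentation (ρ.comp (inr.comp H.subtype)) U
    fun σ v hv => inr_mem_weightSpace ρ ψ hH σ.2 hv
  let bU := (Module.finBasis k U).equivFun
  refine ⟨(bU.conjAlgEquiv k).toMonoidHom.comp ρH, U.subtype ∘ₗ bU.symm.toLinearMap,
    U.subtype_injective.comp bU.symm.injective, fun x m => ?_⟩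
  change ((bU.symm (((∏ i, componentCharacters ψ i (x.left i) : kˣ) : k) •
    bU (ρH x.right (bU.symm m))) : U) : V) = _
  rw [prod_componentCharacters, map_smul, bU.symm_apply_apply]
  exact (map_subtype_apply_of_mem_weightSpace ρ ψ hH x (bU.symm m).2).symm

end Wreath

theorem stmt11_general (k : Type) [Field k] [IsAlgClosed k]
    (G : Type) [CommGroup G] [Fintype G] (n : ℕ)
    (V : Type) [AddCommGroup V] [Module k V] [FiniteDimensional k V]
    (ρ : Representation k (Wreath G n) V) (hirr : IsIrreducibleRep ρ) :
    ∃ (χ : Fin n → (G →* kˣ)) (d : ℕ)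
      (ρM : Representation k ↥(stabSubgroup k G n χ) (Fin d → k)),
      IsIrreducibleRep ρM ∧
        ∃ e : V ≃ₗ[k] IndModule (wreathInc k G n χ) (scaledRep k G n χ d ρM),
          ∀ (w : Wreath G n) (x : V),
            e (ρ w x) = indRep (wreathInc k G n χ) (scaledRep k G n χ d ρM) w (e x) := by
  classical
  have : Nontrivial V := let ⟨⟨v, hv⟩, _⟩ := hirr; ⟨⟨v, 0, hv⟩⟩
  obtain ⟨ψ, hψ⟩ := Representation.exists_weightSpace_ne_bot (ρ.comp SemidirectProduct.inl)
  obtain ⟨ρM, j, hj_inj, hj⟩ := exists_scaledRep_embedding_weightSpace ρ ψ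
  have : NeZero (Module.finrank k _) := ⟨Submodule.finrank_eq_zero.not.mpr hψ⟩
  have h_dim := SemidirectProduct.card_mul_finrank_weightSpace_le ρ ψ
    fun _ => mem_stabSubgroup_componentCharacters
  obtain ⟨h_bij, h_irr⟩ := bijective_indLift_and_isIrreducibleRep hj
    (fun q : Equiv.Perm (Fin n) ⧸ stabSubgroup k G n (componentCharacters ψ) =>
      SemidirectProduct.inr q.out)
    (SemidirectProduct.exists_eq_inr_out_mul_map_subtype _) hirr hj_inj
    (by rw [Module.finrank_fin_fun]; exact h_dim)
  refine ⟨componentCharacters ψ, _, ρM, h_irr.of_scaledRep,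
    (LinearEquiv.ofBijective _ h_bij).symm, fun w x => ?_⟩
  rw [LinearEquiv.symm_apply_eq, LinearEquiv.ofBijective_apply, indLift_indRep,
    LinearEquiv.apply_ofBijective_symm_apply]

/-- Let `k` be an algebraically closed field of characteristic zero,
`G` a finite abelian group and `n ∈ ℕ`.  Every finite-dimensional irreducible
representation `(V, ρ)` of the wreath product `W = G^n ⋊ S_n` is isomorphic to a
representation induced from `G^n ⋊ H`, where `H ≤ S_n` is the stabilizer of a tuple of
characters `χ : Fin n → Hom(G, kˣ)`, and `G^n ⋊ H` acts on an irreducible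
representation `M` of `H` by `(g, σ) ↦ (Π_i χ_i(g_i)) ρ_M(σ)`. -/
theorem stmt11 (k : Type) [Field k] [IsAlgClosed k] [CharZero k]
    (G : Type) [CommGroup G] [Fintype G] (n : ℕ)
    (V : Type) [AddCommGroup V] [Module k V] [FiniteDimensional k V]
    (ρ : Representation k (Wreath G n) V) (hirr : IsIrreducibleRep ρ) :
    ∃ (χ : Fin n → (G →* kˣ)) (d : ℕ)
      (ρM : Representation k ↥(stabSubgroup k G n χ) (Fin d → k)),
      IsIrreducibleRep ρM ∧
        ∃ e : V ≃ₗ[k] IndModule (wreathInc k G n χ) (scaledRep k G n χ d ρM),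
          ∀ (w : Wreath G n) (x : V),
            e (ρ w x) = indRep (wreathInc k G n χ) (scaledRep k G n χ d ρM) w (e x) :=
  stmt11_general k G n V ρ hirr
end

section
/- Let G be a finite group, n ∈ ℕ, and let W = G^n ⋊ S_n be the wreath product, where S_n = Equiv.Perm (Fin n) acts on G^n = (Fin n → G) by permuting coordinates. Let X = G × Fin n, a free G-set under g · (h, i) = (g h, i), on which W acts by G-set automorphisms as follows: σ ∈ S_n acts by (h, i) ↦ (h, σ(i)) and g ∈ G^n acts by (h, i) ↦ (h g_i^{-1}, i), these actions combining to an action of W commuting with the left G-action. Let U and V be finite free G-sets, and fix a set R of representatives of the equivalence classes of G-recollements of (U, V). Then the map from the disjoint union over (C, u, v) ∈ R of Inj_G(C, X) to Inj_G(U, X) × Inj_G(V, X), sending h to (h ∘ u, h ∘ v), is a W-equivariant bijection, where W acts on each set of G-equivariant injections by postcomposition and diagonally on the product. -/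
/-- The left `G`-action on `X = G × Fin n`:  `g • (h, i) = (g h, i)`. -/
def gAct (G : Type) [Group G] (n : ℕ) (g : G) (x : G × Fin n) : G × Fin n :=
  (g * x.1, x.2)

/-- The action of the wreath product `W = G^n ⋊ S_n` on `X = G × Fin n`:
`σ ∈ S_n` acts by `(h, i) ↦ (h, σ i)` and `g ∈ G^n` acts by `(h, i) ↦ (h g_i⁻¹, i)`;
combined, `(g, σ) • (h, i) = (h (g (σ i))⁻¹, σ i)`. -/
def wAct (G : Type) [Group G] (n : ℕ)
    (w : (Fin n → G) ⋊[wreathPhi G n] Equiv.Perm (Fin n)) (x : G × Fin n) :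
    G × Fin n :=
  (x.1 * (w.left (w.right x.2))⁻¹, w.right x.2)

/-- A `G`-recollement of a pair of `G`-sets `U, V`: a finite free `G`-set `C` together
with `G`-equivariant injections `u : U ↪ C`, `v : V ↪ C` whose images cover `C`. -/
structure GRecollement (G : Type) [Group G] (U V : Type) [MulAction G U]
    [MulAction G V] : Type 1 where
  C : Type
  [fintypeC : Fintype C]
  [mulActionC : MulAction G C]
  free : ∀ (g : G) (c : C), g • c = c → g = 1
  u : U ↪ C
  v : V ↪ C
  equivariant_u : ∀ (g : G) (x : U), u (g • x) = g • u x
  equivariant_v : ∀ (g : G) (y : V), v (g • y) = g • v y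
  covers : ∀ c : C, (∃ x, u x = c) ∨ (∃ y, v y = c)

attribute [instance] GRecollement.fintypeC GRecollement.mulActionC

/-- Two `G`-recollements are equivalent if there is a `G`-equivariant bijection of the
underlying `G`-sets commuting with the injections from `U` and from `V`. -/
def GRecollement.Equivalent {G : Type} [Group G] {U V : Type} [MulAction G U]
    [MulAction G V] (r₁ r₂ : GRecollement G U V) : Prop :=
  ∃ e : r₁.C ≃ r₂.C, (∀ (g : G) (c : r₁.C), e (g • c) = g • e c) ∧
    (∀ x, e (r₁.u x) = r₂.u x) ∧ (∀ y, e (r₁.v y) = r₂.v y)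

/-- `Inj_G(A, X)`: the set of `G`-equivariant injections from a `G`-set `A` to
`X = G × Fin n` (with its left `G`-action). -/
def GInj (G : Type) [Group G] (n : ℕ) (A : Type) [MulAction G A] : Type :=
  {f : A ↪ G × Fin n // ∀ (g : G) (a : A), f (g • a) = gAct G n g (f a)}

/-- Postcomposition of a `G`-equivariant injection `A ↪ X` with the action of an
element `w` of the wreath product on `X`. -/
def wComp (G : Type) [Group G] (n : ℕ) {A : Type} [MulAction G A]
    (w : (Fin n → G) ⋊[wreathPhi G n] Equiv.Perm (Fin n)) (f : GInj G n A) :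
    GInj G n A :=
  ⟨⟨fun a => wAct G n w (f.1 a), by
      intro a b h
      apply f.1.injective
      have h2 : w.right (f.1 a).2 = w.right (f.1 b).2 := congrArg Prod.snd h
      have h2' : (f.1 a).2 = (f.1 b).2 := w.right.injective h2
      have h1 := congrArg Prod.fst h
      simp only [wAct] at h1
      rw [h2'] at h1
      exact Prod.ext (mul_right_cancel h1) h2'⟩,
    fun g a => by
      show wAct G n w (f.1 (g • a)) = gAct G n g (wAct G n w (f.1 a))
      rw [f.2 g a]
      simp [wAct, gAct, mul_assoc]⟩

/-- The restriction along `u : U ↪ C` of a `G`-equivariant injection `C ↪ X`. -/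
def restrictU {G : Type} [Group G] {n : ℕ} {U V : Type} [MulAction G U]
    [MulAction G V] (r : GRecollement G U V) (f : GInj G n r.C) : GInj G n U :=
  ⟨r.u.trans f.1, fun g x =>
    (congrArg f.1 (r.equivariant_u g x)).trans (f.2 g (r.u x))⟩

/-- The restriction along `v : V ↪ C` of a `G`-equivariant injection `C ↪ X`. -/
def restrictV {G : Type} [Group G] {n : ℕ} {U V : Type} [MulAction G U]
    [MulAction G V] (r : GRecollement G U V) (f : GInj G n r.C) : GInj G n V :=
  ⟨r.v.trans f.1, fun g y =>
    (congrArg f.1 (r.equivariant_v g y)).trans (f.2 g (r.v y))⟩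

section Aux

variable (G : Type) [Group G] [Fintype G] (n : ℕ) {U V : Type}
  [MulAction G U] [MulAction G V]

/-- The union of the images of `fU` and `fV` in `X`. -/
def pairSet (fU : GInj G n U) (fV : GInj G n V) : Set (G × Fin n) :=
  Set.range fU.1 ∪ Set.range fV.1

/-- The `G`-action on the union of the images. -/
def pairAction (fU : GInj G n U) (fV : GInj G n V) :
    MulAction G (pairSet G n fU fV) where
  smul g x := ⟨gAct G n g x.1, by
    rcases x.2 with ⟨a, ha⟩ | ⟨b, hb⟩
    · exact Or.inl ⟨g • a, by rw [fU.2, ha]⟩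
    · exact Or.inr ⟨g • b, by rw [fV.2, hb]⟩⟩
  one_smul x := Subtype.ext (by show gAct G n 1 x.1 = x.1; simp [gAct])
  mul_smul g h x := Subtype.ext
    (by show gAct G n (g * h) x.1 = gAct G n g (gAct G n h x.1); simp [gAct, mul_assoc])

/-- The recollement built from a pair of `G`-equivariant injections. -/
noncomputable def pairRecollement (fU : GInj G n U) (fV : GInj G n V) : GRecollement G U V where
  C := pairSet G n fU fV
  fintypeC := Fintype.ofFinite _
  mulActionC := pairAction G n fU fV
  free g c h := by
    have h1 : gAct G n g c.1 = c.1 := congrArg Subtype.val h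
    have h2 : g * c.1.1 = c.1.1 := congrArg Prod.fst h1
    exact mul_eq_right.mp h2
  u := ⟨fun a => ⟨fU.1 a, Or.inl ⟨a, rfl⟩⟩,
    fun a b h => fU.1.injective (congrArg Subtype.val h)⟩
  v := ⟨fun b => ⟨fV.1 b, Or.inr ⟨b, rfl⟩⟩,
    fun a b h => fV.1.injective (congrArg Subtype.val h)⟩
  equivariant_u g x := Subtype.ext (fU.2 g x)
  equivariant_v g y := Subtype.ext (fV.2 g y)
  covers c := by
    rcases c.2 with ⟨a, ha⟩ | ⟨b, hb⟩
    · exact Or.inl ⟨a, Subtype.ext ha⟩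
    · exact Or.inr ⟨b, Subtype.ext hb⟩

end Aux

/-- Equivalence of recollements is reflexive. -/
theorem GRecollement.Equivalent.refl {G : Type} [Group G] {U V : Type}
    [MulAction G U] [MulAction G V] (r : GRecollement G U V) : r.Equivalent r :=
  ⟨Equiv.refl _, fun _ _ => rfl, fun _ => rfl, fun _ => rfl⟩

/-- Let `G` be a finite group, `n ∈ ℕ`, `W = G^n ⋊ S_n` the wreath
product acting on the free `G`-set `X = G × Fin n` by `G`-set automorphisms, and let
`U, V` be finite free `G`-sets with `R` a set of representatives of the equivalence
classes of `G`-recollements of `(U, V)`.  Then: the `W`-action on `X` is indeed an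
action, commutes with the left `G`-action, and `X` is free as a `G`-set; and the map
`⨿_{(C,u,v) ∈ R} Inj_G(C, X) → Inj_G(U, X) × Inj_G(V, X)`, `h ↦ (h ∘ u, h ∘ v)`,
is a `W`-equivariant bijection (with `W` acting by postcomposition, diagonally on the
product). -/
theorem stmt12 (G : Type) [Group G] [Fintype G] (n : ℕ)
    (U V : Type) [Fintype U] [Fintype V] [MulAction G U] [MulAction G V]
    (hU : ∀ (g : G) (x : U), g • x = x → g = 1)
    (hV : ∀ (g : G) (y : V), g • y = y → g = 1)
    (R : Set (GRecollement G U V))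
    (hR : ∀ P : GRecollement G U V, ∃! r : R, P.Equivalent r.1) :
    (∀ x : G × Fin n, wAct G n 1 x = x) ∧
      (∀ (w₁ w₂ : (Fin n → G) ⋊[wreathPhi G n] Equiv.Perm (Fin n))
        (x : G × Fin n), wAct G n (w₁ * w₂) x = wAct G n w₁ (wAct G n w₂ x)) ∧
      (∀ (w : (Fin n → G) ⋊[wreathPhi G n] Equiv.Perm (Fin n)) (g : G)
        (x : G × Fin n), wAct G n w (gAct G n g x) = gAct G n g (wAct G n w x)) ∧
      (∀ (g : G) (x : G × Fin n), gAct G n g x = x → g = 1) ∧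
      Function.Bijective
        (fun p : Σ r : R, GInj G n r.1.C =>
          ((restrictU p.1.1 p.2, restrictV p.1.1 p.2) : GInj G n U × GInj G n V)) ∧
      (∀ (w : (Fin n → G) ⋊[wreathPhi G n] Equiv.Perm (Fin n))
        (p : Σ r : R, GInj G n r.1.C),
          ((restrictU p.1.1 (wComp G n w p.2), restrictV p.1.1 (wComp G n w p.2)) :
            GInj G n U × GInj G n V) =
          (wComp G n w (restrictU p.1.1 p.2), wComp G n w (restrictV p.1.1 p.2))) := by
  refine ⟨?_, ?_, ?_, ?_, ⟨?_, ?_⟩, ?_⟩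
  · intro x; simp [wAct]
  · intro w₁ w₂ x
    simp [wAct, wreathPhi, mul_inv_rev, mul_assoc]
    refine ⟨?_, rfl⟩
    show (w₁.left (w₁.right (w₂.right x.2)) * (wreathPhi G n w₁.right w₂.left) (w₁.right (w₂.right x.2)))⁻¹ = _
    simp [wreathPhi]
    show w₂.left (w₁.right.symm (w₁.right (w₂.right x.2))) = _
    rw [Equiv.symm_apply_apply]
  · intro w g x; simp [wAct, gAct, mul_assoc]
  · intro g x h
    exact mul_eq_right.mp (congrArg Prod.fst h)
  · -- injectivity
    rintro ⟨s₁, f₁⟩ ⟨s₂, f₂⟩ h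
    have hu : ∀ x : U, f₁.1 (s₁.1.u x) = f₂.1 (s₂.1.u x) := fun x =>
      congrFun (congrArg (fun t : GInj G n U => (t.1 : U → G × Fin n))
        (congrArg Prod.fst h)) x
    have hv : ∀ y : V, f₁.1 (s₁.1.v y) = f₂.1 (s₂.1.v y) := fun y =>
      congrFun (congrArg (fun t : GInj G n V => (t.1 : V → G × Fin n))
        (congrArg Prod.snd h)) y
    have hcov : ∀ c : s₁.1.C, ∃ c', f₂.1 c' = f₁.1 c := by
      intro c
      rcases s₁.1.covers c with ⟨x, hx⟩ | ⟨y, hy⟩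
      · exact ⟨s₂.1.u x, by rw [← hx, hu x]⟩
      · exact ⟨s₂.1.v y, by rw [← hy, hv y]⟩
    set e₀ : s₁.1.C → s₂.1.C := fun c => Classical.choose (hcov c) with he₀def
    have he₀ : ∀ c, f₂.1 (e₀ c) = f₁.1 c := fun c => Classical.choose_spec (hcov c)
    have he₀inj : Function.Injective e₀ := by
      intro a b hab
      apply f₁.1.injective
      rw [← he₀ a, ← he₀ b, hab]
    have he₀surj : Function.Surjective e₀ := by
      intro c'
      rcases s₂.1.covers c' with ⟨x, hx⟩ | ⟨y, hy⟩
      · exact ⟨s₁.1.u x, f₂.1.injective (by rw [he₀, hu x, hx])⟩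
      · exact ⟨s₁.1.v y, f₂.1.injective (by rw [he₀, hv y, hy])⟩
    have hequiv : s₁.1.Equivalent s₂.1 := by
      refine ⟨Equiv.ofBijective e₀ ⟨he₀inj, he₀surj⟩, ?_, ?_, ?_⟩
      · intro g c
        apply f₂.1.injective
        show f₂.1 (e₀ (g • c)) = f₂.1 (g • e₀ c)
        rw [he₀, f₁.2, f₂.2, he₀]
      · intro x
        apply f₂.1.injective
        show f₂.1 (e₀ (s₁.1.u x)) = _
        rw [he₀, hu x]
      · intro y
        apply f₂.1.injective
        show f₂.1 (e₀ (s₁.1.v y)) = _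
        rw [he₀, hv y]
    obtain ⟨r₀, _, huniq⟩ := hR s₁.1
    have hs : s₁ = s₂ := (huniq s₁ (GRecollement.Equivalent.refl s₁.1)).trans
      (huniq s₂ hequiv).symm
    subst hs
    have hf : f₁ = f₂ := by
      apply Subtype.ext
      apply Function.Embedding.ext
      intro c
      rcases s₁.1.covers c with ⟨x, hx⟩ | ⟨y, hy⟩
      · rw [← hx]; exact hu x
      · rw [← hy]; exact hv y
    rw [hf]
  · -- surjectivity
    rintro ⟨fU, fV⟩
    obtain ⟨r, hre, _⟩ := hR (pairRecollement G n fU fV)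
    obtain ⟨e, heq, heu, hev⟩ := hre
    let ι : (pairRecollement G n fU fV).C → G × Fin n := Subtype.val
    have hιinj : Function.Injective ι := fun a b h => Subtype.ext h
    have hcoe : ∀ (g : G) (c : (pairRecollement G n fU fV).C),
        ι (g • c) = gAct G n g (ι c) := fun g c => rfl
    refine ⟨⟨r, ⟨⟨fun c => ι (e.symm c), ?_⟩, ?_⟩⟩, ?_⟩
    · intro a b hab
      exact e.symm.injective (hιinj hab)
    · intro g c
      have h1 : e.symm (g • c) = g • e.symm c := by
        apply e.injective
        rw [heq, Equiv.apply_symm_apply, Equiv.apply_symm_apply]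
      show ι (e.symm (g • c)) = gAct G n g (ι (e.symm c))
      rw [h1, hcoe]
    · refine Prod.ext ?_ ?_
      · apply Subtype.ext
        apply Function.Embedding.ext
        intro x
        show ι (e.symm (r.1.u x)) = fU.1 x
        rw [← heu x, Equiv.symm_apply_apply]
        rfl
      · apply Subtype.ext
        apply Function.Embedding.ext
        intro y
        show ι (e.symm (r.1.v y)) = fV.1 y
        rw [← hev y, Equiv.symm_apply_apply]
        rfl
  · intro w p
    rfl
end
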